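/- arXiv:2507.20642 — 7 statements merged into one kernel-verified Lean document; each statement's English description precedes it below -/
import Mathlib

section
/- Let X = [−1,2] with the Euclidean distance, C = [−1,0] ∪ [1,2], and g : C → ℝ defined by g(x) = 0 for x ∈ [−1,0] and g(x) = 1 for x ∈ [1,2]. Then g is 1-Lipschitz and lip(g,x) = 0 for every x ∈ C, but every 1-Lipschitz function f : X → ℝ extending g satisfies f(t) = t for t ∈ [0,1], and hence lip(f,0) = 1 ≠ 0 = lip(g,0). In particular, the Lipschitz constant (L+ε) in the slope-preserving extension theorem cannot be improved to L. -/
open Metric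

/-- `Lip(g, A, x)`: the infimum of the set of `ℓ ≥ 0` such that
`|g z − g x| ≤ ℓ · d(x,z)` for all `z ∈ A`. -/
noncomputable def lipConstAt {X : Type*} [MetricSpace X] (g : X → ℝ) (A : Set X) (x : X) : ℝ :=
  sInf {ℓ : ℝ | 0 ≤ ℓ ∧ ∀ z ∈ A, |g z - g x| ≤ ℓ * dist x z}

/-- The slope of `g` at `x`, relative to the set `A` on which `g` is considered
to be defined: `lip(g,x) = inf_{r>0} Lip(g, A ∩ B_r(x), x)`. -/
noncomputable def locSlope {X : Type*} [MetricSpace X] (g : X → ℝ) (A : Set X) (x : X) : ℝ :=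
  sInf {a : ℝ | ∃ r : ℝ, 0 < r ∧ a = lipConstAt g (A ∩ ball x r) x}

lemma lipConstAt_nonneg {X : Type*} [MetricSpace X] (g : X → ℝ) (A : Set X) (x : X) :
    0 ≤ lipConstAt g A x :=
  Real.sInf_nonneg fun _ hℓ => hℓ.1

lemma lipConstAt_eq_zero_of_const {X : Type*} [MetricSpace X] (g : X → ℝ) (A : Set X) (x : X)
    (h : ∀ z ∈ A, g z = g x) : lipConstAt g A x = 0 := by
  refine le_antisymm (csInf_le ⟨0, fun ℓ hℓ => hℓ.1⟩ ?_) (lipConstAt_nonneg g A x)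
  refine ⟨le_refl 0, fun z hz => ?_⟩
  rw [h z hz]
  simp

lemma locSlope_eq_zero {X : Type*} [MetricSpace X] (g : X → ℝ) (A : Set X) (x : X)
    (r : ℝ) (hr : 0 < r) (h : ∀ z ∈ A ∩ ball x r, g z = g x) : locSlope g A x = 0 := by
  refine le_antisymm (csInf_le ⟨0, ?_⟩ ⟨r, hr, (lipConstAt_eq_zero_of_const g _ x h).symm⟩)
      (Real.sInf_nonneg ?_)
  · rintro a ⟨s, _, rfl⟩; exact lipConstAt_nonneg _ _ _
  · rintro a ⟨s, _, rfl⟩; exact lipConstAt_nonneg _ _ _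

/-- On `X = [−1,2]`, with `C = [−1,0] ∪ [1,2]` and `g = 0` on `[−1,0]`, `g = 1` on `[1,2]`:
`g` is `1`-Lipschitz on `C` with vanishing slope at every point of `C`, but any `1`-Lipschitz
extension `f` of `g` to `X` satisfies `f t = t` on `[0,1]`, hence
`lip(f,0) = 1 ≠ 0 = lip(g,0)`.  So the constant `L+ε` in the slope-preserving extension
theorem cannot be improved to `L`. -/
theorem epsilon_dependence_necessary
    (Xs C : Set ℝ)
    (hXs : Xs = Set.Icc (-1 : ℝ) 2)
    (hCs : C = Set.Icc (-1 : ℝ) 0 ∪ Set.Icc (1 : ℝ) 2)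
    (g : ℝ → ℝ)
    (hg0 : ∀ x ∈ Set.Icc (-1 : ℝ) 0, g x = 0)
    (hg1 : ∀ x ∈ Set.Icc (1 : ℝ) 2, g x = 1) :
    (∀ x ∈ C, ∀ y ∈ C, |g x - g y| ≤ 1 * dist x y) ∧
    (∀ x ∈ C, locSlope g C x = 0) ∧
    (∀ f : ℝ → ℝ,
      (∀ x ∈ Xs, ∀ y ∈ Xs, |f x - f y| ≤ 1 * dist x y) →
      (∀ x ∈ C, f x = g x) →
      (∀ t ∈ Set.Icc (0 : ℝ) 1, f t = t) ∧
      locSlope f Xs 0 = 1 ∧ locSlope f Xs 0 ≠ locSlope g C 0) := by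
  subst hXs hCs
  have h0C : (0 : ℝ) ∈ Set.Icc (-1 : ℝ) 0 ∪ Set.Icc (1 : ℝ) 2 := Or.inl (by norm_num)
  have h1C : (1 : ℝ) ∈ Set.Icc (-1 : ℝ) 0 ∪ Set.Icc (1 : ℝ) 2 := Or.inr (by norm_num)
  -- part 2 helper: slope of g vanishes at every x ∈ C
  have hslopeg : ∀ x ∈ Set.Icc (-1 : ℝ) 0 ∪ Set.Icc (1 : ℝ) 2,
      locSlope g (Set.Icc (-1 : ℝ) 0 ∪ Set.Icc (1 : ℝ) 2) x = 0 := by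
    intro x hx
    refine locSlope_eq_zero g _ x (1/2) (by norm_num) ?_
    rintro z ⟨hzC, hzb⟩
    rw [mem_ball, Real.dist_eq] at hzb
    rcases hx with hx | hx <;> rcases hzC with hz | hz
    · rw [hg0 z hz, hg0 x hx]
    · exfalso
      have : (1 : ℝ) ≤ |z - x| := by
        rw [abs_sub_comm, abs_of_nonpos (by linarith [hz.1, hx.2])]
        linarith [hz.1, hx.2]
      linarith
    · exfalso
      have : (1 : ℝ) ≤ |z - x| := by
        rw [abs_of_nonpos (by linarith [hz.2, hx.1])]
        linarith [hz.2, hx.1]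
      linarith
    · rw [hg1 z hz, hg1 x hx]
  refine ⟨?_, hslopeg, ?_⟩
  · -- g is 1-Lipschitz on C
    intro x hx y hy
    rcases hx with hx | hx <;> rcases hy with hy | hy
    · rw [hg0 x hx, hg0 y hy]; simp [dist_nonneg]
    · rw [hg0 x hx, hg1 y hy, Real.dist_eq, one_mul]
      have : (1 : ℝ) ≤ |x - y| := by
        rw [abs_of_nonpos (by linarith [hx.2, hy.1])]
        linarith [hx.2, hy.1]
      calc |(0 : ℝ) - 1| = 1 := by norm_num
        _ ≤ |x - y| := this
    · rw [hg1 x hx, hg0 y hy, Real.dist_eq, one_mul]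
      have : (1 : ℝ) ≤ |x - y| := by
        rw [abs_of_nonneg (by linarith [hx.1, hy.2])]
        linarith [hx.1, hy.2]
      calc |(1 : ℝ) - 0| = 1 := by norm_num
        _ ≤ |x - y| := this
    · rw [hg1 x hx, hg1 y hy]; simp [dist_nonneg]
  · intro f hf hext
    have hf0 : f 0 = 0 := by rw [hext 0 h0C, hg0 0 (by norm_num)]
    have hf1 : f 1 = 1 := by rw [hext 1 h1C, hg1 1 (by norm_num)]
    have h0X : (0 : ℝ) ∈ Set.Icc (-1 : ℝ) 2 := by norm_num
    have h1X : (1 : ℝ) ∈ Set.Icc (-1 : ℝ) 2 := by norm_num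
    have hft : ∀ t ∈ Set.Icc (0 : ℝ) 1, f t = t := by
      intro t ht
      have htX : t ∈ Set.Icc (-1 : ℝ) 2 := ⟨by linarith [ht.1], by linarith [ht.2]⟩
      have h1 := hf t htX 0 h0X
      have h2 := hf 1 h1X t htX
      rw [hf0, Real.dist_eq, one_mul, sub_zero] at h1
      rw [hf1, Real.dist_eq, one_mul] at h2
      have ha1 : |f t| ≤ t := by
        rwa [sub_zero, abs_of_nonneg ht.1] at h1
      have ha2 : |1 - f t| ≤ 1 - t := by
        rwa [abs_of_nonneg (by linarith [ht.2] : (0:ℝ) ≤ 1 - t)] at h2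
      linarith [(abs_le.1 ha1).1, (abs_le.1 ha1).2, (abs_le.1 ha2).1, (abs_le.1 ha2).2]
    -- lipConstAt f (Xs ∩ ball 0 r) 0 = 1 for every r > 0
    have hlip : ∀ r : ℝ, 0 < r → lipConstAt f (Set.Icc (-1 : ℝ) 2 ∩ ball 0 r) 0 = 1 := by
      intro r hr
      have hmem1 : (1 : ℝ) ∈ {ℓ : ℝ | 0 ≤ ℓ ∧
          ∀ z ∈ Set.Icc (-1 : ℝ) 2 ∩ ball 0 r, |f z - f 0| ≤ ℓ * dist 0 z} := by
        refine ⟨zero_le_one, fun z hz => ?_⟩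
        have := hf z hz.1 0 h0X
        rwa [dist_comm] at this
      refine le_antisymm (csInf_le ⟨0, fun ℓ hℓ => hℓ.1⟩ hmem1) (le_csInf ⟨1, hmem1⟩ ?_)
      rintro ℓ ⟨hℓ0, hℓ⟩
      set z := min (r/2) 1 with hz
      have hz0 : 0 < z := lt_min (by linarith) one_pos
      have hz1 : z ≤ 1 := min_le_right _ _
      have hzX : z ∈ Set.Icc (-1 : ℝ) 2 := ⟨by linarith, by linarith⟩
      have hzb : z ∈ ball (0 : ℝ) r := by
        rw [mem_ball, Real.dist_eq, sub_zero, abs_of_pos hz0]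
        calc z ≤ r/2 := min_le_left _ _
          _ < r := by linarith
      have hfz : f z = z := hft z ⟨hz0.le, hz1⟩
      have := hℓ z ⟨hzX, hzb⟩
      rw [hfz, hf0, sub_zero, Real.dist_eq, zero_sub, abs_neg, abs_of_pos hz0] at this
      nlinarith
    have hslopef : locSlope f (Set.Icc (-1 : ℝ) 2) 0 = 1 := by
      refine le_antisymm (csInf_le ⟨0, ?_⟩ ⟨1, one_pos, (hlip 1 one_pos).symm⟩)
          (le_csInf ⟨1, 1, one_pos, (hlip 1 one_pos).symm⟩ ?_)
      · rintro a ⟨s, _, rfl⟩; exact lipConstAt_nonneg _ _ _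
      · rintro a ⟨s, hs, rfl⟩; rw [hlip s hs]
    refine ⟨hft, hslopef, ?_⟩
    rw [hslopef, hslopeg 0 h0C]
    norm_num
end

section
/- In the slope-extension construction, for every x ∈ C the function φ_x : X → ℝ, φ_x(y) = g(x) + pen_x(d(x,y)), is (L+ε)-Lipschitz. -/
open Metric

/-- Step 1 of the slope-extension construction: for every `x ∈ C`, the function
`φ_x(y) = g(x) + pen_x(d(x,y))` is `(L+ε)`-Lipschitz on `X`. -/
theorem phi_lipschitz
    {X : Type*} [MetricSpace X] (C : Set X) (hC : C.Nonempty)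
    (g : X → ℝ) (L ε : ℝ) (hL : 0 < L) (hε : 0 < ε) (hεL : ε ≤ L)
    (hg : ∀ x ∈ C, ∀ y ∈ C, |g x - g y| ≤ L * dist x y)
    (e : ℤ → ℝ) (he : ∀ k : ℤ, 0 < e k)
    (hmono : ∀ k : ℤ, e (k - 1) / e k ≤ e k / e (k + 1))
    (hlim : Filter.Tendsto (fun k : ℤ => e (k - 1) / e k) Filter.atBot (nhds 0))
    (hratio : ∀ k : ℤ, e (k - 1) / e k ≤ ε / (3 * (L + ε)))
    (S : X → ℤ → ℝ)
    (hS : ∀ x ∈ C, ∀ k : ℤ,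
      S x k = sInf {ℓ : ℝ | 0 ≤ ℓ ∧ ∀ z ∈ C, dist z x < e k → |g z - g x| ≤ ℓ * dist x z})
    (pen : X → ℝ → ℝ)
    (hpen0 : ∀ x ∈ C, pen x 0 = 0)
    (hpennonneg : ∀ x ∈ C, ∀ t : ℝ, 0 ≤ t → 0 ≤ pen x t)
    (hpencont : ∀ x ∈ C, ContinuousOn (pen x) (Set.Ici 0))
    (hpenlin : ∀ x ∈ C, ∀ k : ℤ, ∀ s t : ℝ, e (k - 2) ≤ s → s ≤ t → t ≤ e (k - 1) →
      pen x t - pen x s = (S x k + 3 * L * (e (k - 2) / e (k - 1))) * (t - s))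
    :
    ∀ x ∈ C, ∀ y z : X,
      |(g x + pen x (dist x y)) - (g x + pen x (dist x z))| ≤ (L + ε) * dist y z := by
  intro x hx y z
  have hLε : (0:ℝ) < L + ε := by linarith
  set c : ℝ := ε / (3 * (L + ε)) with hc
  have hc0 : 0 < c := by positivity
  have hc3 : c ≤ 1/3 := by
    rw [hc, div_le_iff₀ (by linarith : (0:ℝ) < 3*(L+ε))]
    linarith
  have hc1 : c < 1 := by linarith
  have hestep : ∀ k : ℤ, e (k-1) ≤ c * e k := by
    intro k
    have h := hratio k
    rw [div_le_iff₀ (he k)] at h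
    exact h
  have hemonostep : ∀ k : ℤ, e (k-1) ≤ e k := by
    intro k
    have h := hestep k
    nlinarith [he k]
  have hemononat : ∀ (n : ℕ) (j : ℤ), e j ≤ e (j + n) := by
    intro n
    induction n with
    | zero => intro j; simp
    | succ n ih =>
      intro j
      have h1 := ih j
      have h2 := hemonostep (j + n + 1)
      have h3 : (j + (n:ℤ) + 1) - 1 = j + n := by ring
      rw [h3] at h2
      have h4 : (j + ((n:ℕ)+1 : ℕ) : ℤ) = j + n + 1 := by push_cast; ring
      rw [h4]
      linarith
  have hemono : ∀ j j' : ℤ, j ≤ j' → e j ≤ e j' := by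
    intro j j' h
    have h2 := hemononat (j' - j).toNat j
    rw [show (j + ((j' - j).toNat : ℤ)) = j' by omega] at h2
    exact h2
  have hSbounds : ∀ k : ℤ, 0 ≤ S x k ∧ S x k ≤ L := by
    intro k
    have hSk := hS x hx k
    have hmemL : L ∈ {ℓ : ℝ | 0 ≤ ℓ ∧ ∀ z ∈ C, dist z x < e k → |g z - g x| ≤ ℓ * dist x z} := by
      refine ⟨hL.le, fun w hw _ => ?_⟩
      have h := hg w hw x hx
      rwa [dist_comm w x] at h
    constructor
    · rw [hSk]; exact le_csInf ⟨L, hmemL⟩ (fun b hb => hb.1)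
    · rw [hSk]; exact csInf_le ⟨0, fun b hb => hb.1⟩ hmemL
  have hslope : ∀ k : ℤ, 0 ≤ S x k + 3*L*(e (k-2)/e (k-1)) ∧
      S x k + 3*L*(e (k-2)/e (k-1)) ≤ L + ε := by
    intro k
    obtain ⟨h0, hL'⟩ := hSbounds k
    have hr : e (k-2) / e (k-1) ≤ c := by
      have h := hratio (k-1)
      rw [show (k - 1 - 1 : ℤ) = k - 2 by ring] at h
      exact h
    have hrpos : 0 ≤ e (k-2) / e (k-1) := le_of_lt (div_pos (he _) (he _))
    have hcmul : c * (3*(L+ε)) = ε := div_mul_cancel₀ ε (by linarith : (3*(L+ε)) ≠ 0)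
    constructor
    · nlinarith
    · nlinarith
  have hone : ∀ (k : ℤ) (s t : ℝ), e (k-2) ≤ s → s ≤ t → t ≤ e (k-1) →
      0 ≤ pen x t - pen x s ∧ pen x t - pen x s ≤ (L+ε)*(t-s) := by
    intro k s t h1 h2 h3
    have heq := hpenlin x hx k s t h1 h2 h3
    obtain ⟨hs0, hs1⟩ := hslope k
    constructor
    · rw [heq]; exact mul_nonneg hs0 (by linarith)
    · rw [heq]; exact mul_le_mul_of_nonneg_right hs1 (by linarith)
  have hchain : ∀ (n : ℕ) (k : ℤ) (s t : ℝ), e (k-2) ≤ s → s ≤ t → t ≤ e (k-2+n) →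
      0 ≤ pen x t - pen x s ∧ pen x t - pen x s ≤ (L+ε)*(t-s) := by
    intro n
    induction n with
    | zero =>
      intro k s t h1 h2 h3
      rw [show (k - 2 + ((0:ℕ):ℤ)) = k - 2 by push_cast; ring] at h3
      have hst : s = t := le_antisymm h2 (le_trans h3 h1)
      subst hst
      constructor
      · linarith
      · nlinarith
    | succ n ih =>
      intro k s t h1 h2 h3
      rw [show (k - 2 + (((n:ℕ)+1 : ℕ)):ℤ) = (k + n) - 1 by push_cast; ring] at h3
      by_cases ht : t ≤ e (k - 2 + n)
      · exact ih k s t h1 h2 ht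
      push_neg at ht
      have hmid : (k - 2 + (n:ℤ)) = (k + n) - 2 := by ring
      by_cases hs : e (k - 2 + n) ≤ s
      · rw [hmid] at hs
        exact hone (k+n) s t hs h2 h3
      push_neg at hs
      have IH := ih k s (e (k - 2 + n)) h1 hs.le (le_refl _)
      have H2 := hone (k+n) (e (k - 2 + n)) t (by rw [hmid]) ht.le h3
      exact ⟨by linarith [IH.1, H2.1], by linarith [IH.2, H2.2]⟩
  have hgeo : ∀ n : ℕ, e (0 - n) ≤ c^n * e 0 := by
    intro n
    induction n with
    | zero => simp
    | succ n ih =>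
      rw [show ((0:ℤ) - (((n:ℕ)+1:ℕ)):ℤ) = (0 - n) - 1 by push_cast; ring]
      calc e ((0 - (n:ℤ)) - 1) ≤ c * e (0 - n) := hestep _
        _ ≤ c * (c^n * e 0) := by nlinarith [he ((0:ℤ) - n)]
        _ = c^(n+1) * e 0 := by ring
  have hsmall : ∀ s : ℝ, 0 < s → ∃ k : ℤ, e k ≤ s := by
    intro s hs
    obtain ⟨n, hn⟩ := exists_pow_lt_of_lt_one (div_pos hs (he 0)) hc1
    refine ⟨0 - n, le_trans (hgeo n) ?_⟩
    rw [lt_div_iff₀ (he 0)] at hn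
    linarith
  have hbig3 : ∀ n : ℕ, (3:ℝ)^n * e 0 ≤ e n := by
    intro n
    induction n with
    | zero => simp
    | succ n ih =>
      have h1 := hestep ((n:ℤ) + 1)
      rw [show ((n:ℤ) + 1) - 1 = (n:ℤ) by ring] at h1
      have h2 : e (n:ℤ) ≤ (1/3) * e ((n:ℤ)+1) := by nlinarith [he ((n:ℤ)+1)]
      rw [show (((n:ℕ)+1:ℕ):ℤ) = (n:ℤ) + 1 by push_cast; ring]
      have h0 := he 0
      calc (3:ℝ)^(n+1) * e 0 = 3 * ((3:ℝ)^n * e 0) := by ring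
        _ ≤ 3 * e (n:ℤ) := by nlinarith
        _ ≤ e ((n:ℤ)+1) := by linarith
  have hbigk : ∀ t : ℝ, ∃ k : ℤ, t ≤ e k := by
    intro t
    obtain ⟨n, hn⟩ := pow_unbounded_of_one_lt (t / e 0) (by norm_num : (1:ℝ) < 3)
    rw [div_lt_iff₀ (he 0)] at hn
    exact ⟨n, by linarith [hbig3 n]⟩
  have keypos : ∀ s t : ℝ, 0 < s → s ≤ t →
      0 ≤ pen x t - pen x s ∧ pen x t - pen x s ≤ (L+ε)*(t-s) := by
    intro s t hs hst
    obtain ⟨k, hk⟩ := hsmall s hs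
    obtain ⟨k', hk'⟩ := hbigk t
    have ht' : t ≤ e ((k+2) - 2 + ((k' - k).toNat : ℤ)) := le_trans hk' (hemono _ _ (by omega))
    have hchain' := hchain (k' - k).toNat (k+2) s t
      (by rw [show ((k:ℤ)+2-2) = k by ring]; exact hk) hst ht'
    exact hchain'
  have key : ∀ s t : ℝ, 0 ≤ s → s ≤ t →
      0 ≤ pen x t - pen x s ∧ pen x t - pen x s ≤ (L+ε)*(t-s) := by
    intro s t hs hst
    rcases hs.lt_or_eq with hs' | hs'
    · exact keypos s t hs' hst
    · have hs0 : s = 0 := hs'.symm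
      subst hs0
      rw [hpen0 x hx]
      refine ⟨by simpa using hpennonneg x hx t hst, ?_⟩
      rcases hst.lt_or_eq with ht | ht
      · -- 0 < t : limit argument with e(0-n) → 0
        set u : ℕ → ℝ := fun n => e (0 - n) with hu
        have hupos : ∀ n, 0 < u n := fun n => he _
        have hu0 : Filter.Tendsto u Filter.atTop (nhds 0) := by
          have hpow : Filter.Tendsto (fun n : ℕ => c^n * e 0) Filter.atTop (nhds 0) := by
            have := tendsto_pow_atTop_nhds_zero_of_lt_one hc0.le hc1
            simpa using this.mul_const (e 0)
          exact squeeze_zero (fun n => (hupos n).le) (fun n => hgeo n) hpow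
        have hcw : ContinuousWithinAt (pen x) (Set.Ici 0) 0 :=
          (hpencont x hx) 0 Set.self_mem_Ici
        have hun : Filter.Tendsto u Filter.atTop (nhdsWithin 0 (Set.Ici 0)) :=
          tendsto_nhdsWithin_of_tendsto_nhds_of_eventually_within u hu0
            (Filter.Eventually.of_forall (fun n => (hupos n).le))
        have hpenu : Filter.Tendsto (fun n => pen x (u n)) Filter.atTop (nhds 0) := by
          have := hcw.tendsto.comp hun
          rwa [hpen0 x hx] at this
        have hev : ∀ᶠ n in Filter.atTop, pen x t - 0 ≤ (L+ε)*t + pen x (u n) := by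
          filter_upwards [hu0.eventually (gt_mem_nhds ht)] with n hn
          have hkp := keypos (u n) t (hupos n) hn.le
          have hup := (hupos n).le
          have hpn := hpennonneg x hx (u n) hup
          nlinarith [hkp.2]
        have hlim2 : Filter.Tendsto (fun n => (L+ε)*t + pen x (u n)) Filter.atTop
            (nhds ((L+ε)*t + 0)) := tendsto_const_nhds.add hpenu
        have := ge_of_tendsto hlim2 hev
        simpa using this
      · rw [← ht, hpen0 x hx]; simp
  have habs : |pen x (dist x y) - pen x (dist x z)| ≤ (L+ε) * dist y z := by
    rcases le_total (dist x y) (dist x z) with h | h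
    · obtain ⟨h1, h2⟩ := key (dist x y) (dist x z) dist_nonneg h
      rw [abs_sub_comm, abs_of_nonneg h1]
      have htri : dist x z ≤ dist x y + dist z y := dist_triangle_right x z y
      rw [dist_comm z y] at htri
      nlinarith
    · obtain ⟨h1, h2⟩ := key (dist x z) (dist x y) dist_nonneg h
      rw [abs_of_nonneg h1]
      have htri : dist x y ≤ dist x z + dist y z := dist_triangle_right x y z
      nlinarith
  calc |(g x + pen x (dist x y)) - (g x + pen x (dist x z))|
      = |pen x (dist x y) - pen x (dist x z)| := by ring_nf
    _ ≤ (L+ε) * dist y z := habs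
end

section
/- In the slope-extension construction, whenever x, y ∈ C and k ∈ ℤ satisfy ε_{k−1} ≤ d(x,y) ≤ ε_k, one has φ_x(y) ≥ g(y) + ε_{k−2}·L. -/
open Metric

private lemma key_slope
    {X : Type*} [MetricSpace X] (C : Set X)
    (g : X → ℝ) (L ε : ℝ) (hL : 0 < L) (hε : 0 < ε)
    (hg : ∀ x ∈ C, ∀ y ∈ C, |g x - g y| ≤ L * dist x y)
    (e : ℤ → ℝ) (he : ∀ k : ℤ, 0 < e k)
    (hratio : ∀ k : ℤ, e (k - 1) / e k ≤ ε / (3 * (L + ε)))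
    (S : X → ℤ → ℝ)
    (hS : ∀ x ∈ C, ∀ k : ℤ,
      S x k = sInf {ℓ : ℝ | 0 ≤ ℓ ∧ ∀ z ∈ C, dist z x < e k → |g z - g x| ≤ ℓ * dist x z})
    (pen : X → ℝ → ℝ)
    (hpennonneg : ∀ x ∈ C, ∀ t : ℝ, 0 ≤ t → 0 ≤ pen x t)
    (hpenlin : ∀ x ∈ C, ∀ k : ℤ, ∀ s t : ℝ, e (k - 2) ≤ s → s ≤ t → t ≤ e (k - 1) →
      pen x t - pen x s = (S x k + 3 * L * (e (k - 2) / e (k - 1))) * (t - s)) :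
    ∀ x ∈ C, ∀ y ∈ C, ∀ k : ℤ, e (k - 1) ≤ dist x y → dist x y < e k →
      g y + e (k - 2) * L ≤ g x + pen x (dist x y) := by
  intro x hx y hy k hd1 hd2
  -- basic facts about the sets defining S
  set A : ℤ → Set ℝ := fun k =>
    {ℓ : ℝ | 0 ≤ ℓ ∧ ∀ z ∈ C, dist z x < e k → |g z - g x| ≤ ℓ * dist x z} with hA
  have hLA : ∀ j : ℤ, L ∈ A j := by
    intro j
    refine ⟨hL.le, fun z hz _ => ?_⟩
    have := hg z hz x hx
    rwa [dist_comm z x] at this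
  have hbdd : ∀ j : ℤ, BddBelow (A j) := fun j => ⟨0, fun l hl => hl.1⟩
  have hSval : ∀ j : ℤ, S x j = sInf (A j) := fun j => hS x hx j
  have hSle : ∀ j : ℤ, S x j ≤ L := by
    intro j; rw [hSval j]; exact csInf_le (hbdd j) (hLA j)
  have hSnn : ∀ j : ℤ, 0 ≤ S x j := by
    intro j; rw [hSval j]; exact le_csInf ⟨L, hLA j⟩ (fun l hl => hl.1)
  have hSbound : ∀ j : ℤ, ∀ z ∈ C, dist z x < e j → |g z - g x| ≤ S x j * dist x z := by
    intro j z hz hzj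
    rcases eq_or_lt_of_le (dist_nonneg (x := x) (y := z)) with h0 | h0
    · have := (hLA j).2 z hz hzj
      rw [← h0] at this ⊢
      simpa using this
    · rw [hSval j]
      rw [← div_le_iff₀ h0]
      refine le_csInf ⟨L, hLA j⟩ (fun l hl => ?_)
      rw [div_le_iff₀ h0]
      exact hl.2 z hz hzj
  have hemono : ∀ j : ℤ, e (j - 1) < e j := by
    intro j
    have h1 := hratio j
    have h2 : ε / (3 * (L + ε)) < 1 := by
      rw [div_lt_one (by positivity)]; linarith
    have := lt_of_le_of_lt h1 h2
    rwa [div_lt_one (he j)] at this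
  have hSmono : S x k ≤ S x (k + 1) := by
    rw [hSval k, hSval (k + 1)]
    refine csInf_le_csInf (hbdd k) ⟨L, hLA (k + 1)⟩ ?_
    intro l hl
    refine ⟨hl.1, fun z hz hzk => ?_⟩
    have : e k < e (k + 1) := by
      have := hemono (k + 1); rwa [show k + 1 - 1 = k by ring] at this
    exact hl.2 z hz (hzk.trans this)
  -- abbreviations
  set d := dist x y with hdd
  set a := e (k - 2) with ha'
  set b := e (k - 1) with hb'
  set c := e k with hc'
  have ha : 0 < a := he _
  have hb : 0 < b := he _
  have hc : 0 < c := he _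
  have hab : a < b := by
    have := hemono (k - 1); rwa [show k - 1 - 1 = k - 2 by ring] at this
  -- ratio bound : a / b ≤ 1/3
  have hr3 : a / b ≤ 1 / 3 := by
    have h1 := hratio (k - 1)
    rw [show k - 1 - 1 = k - 2 by ring] at h1
    have h2 : ε / (3 * (L + ε)) ≤ 1 / 3 := by
      rw [div_le_div_iff₀ (by positivity) (by norm_num)]; linarith
    exact h1.trans h2
  have h3Lab : 3 * L * (a / b) ≤ L := by
    have := mul_le_mul_of_nonneg_left hr3 (show (0:ℝ) ≤ 3 * L by positivity)
    linarith
  -- pen on [a, b]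
  have h1 : pen x b - pen x a = (S x k + 3 * L * (a / b)) * (b - a) :=
    hpenlin x hx k a b le_rfl hab.le le_rfl
  -- pen on [b, d] (interval for k+1)
  have h2 : pen x d - pen x b = (S x (k + 1) + 3 * L * (b / c)) * (d - b) := by
    have := hpenlin x hx (k + 1) b d
      (by rw [show k + 1 - 2 = k - 1 by ring])
      hd1 (by rw [show k + 1 - 1 = k by ring]; exact hd2.le)
    rwa [show k + 1 - 2 = k - 1 by ring, show k + 1 - 1 = k by ring] at this
  have h4 : 0 ≤ pen x a := hpennonneg x hx a ha.le
  -- slope bound on g between x and y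
  have h3 : g y - g x ≤ S x k * d := by
    have := hSbound k y hy (by rwa [dist_comm])
    calc g y - g x ≤ |g y - g x| := le_abs_self _
      _ ≤ S x k * d := this
  -- the key arithmetic
  have e2 : S x k * (d - b) ≤ (S x (k + 1) + 3 * L * (b / c)) * (d - b) := by
    have hbc : 0 ≤ 3 * L * (b / c) := by positivity
    exact mul_le_mul_of_nonneg_right (by linarith [hSmono]) (by linarith)
  have e3 : (S x k + 3 * L * (a / b)) * (b - a)
      = S x k * (b - a) + 3 * L * a - 3 * L * (a / b) * a := by
    field_simp
    ring
  have e5 : S x k * a + 3 * L * (a / b) * a ≤ 2 * L * a := by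
    have h := mul_le_mul_of_nonneg_right
      (show S x k + 3 * L * (a / b) ≤ 2 * L by linarith [hSle k, h3Lab]) ha.le
    linarith [h]
  have final : S x k * d + a * L ≤ pen x d := by linarith [e2, e3, e5, h1, h2, h4]
  linarith [h3, final]

/-- Step 2 of the slope-extension construction: whenever `x, y ∈ C` and
`ε_{k−1} ≤ d(x,y) ≤ ε_k`, one has `φ_x(y) ≥ g(y) + ε_{k−2}·L`. -/
theorem phi_ge_on_C
    {X : Type*} [MetricSpace X] (C : Set X) (hC : C.Nonempty)
    (g : X → ℝ) (L ε : ℝ) (hL : 0 < L) (hε : 0 < ε) (hεL : ε ≤ L)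
    (hg : ∀ x ∈ C, ∀ y ∈ C, |g x - g y| ≤ L * dist x y)
    (e : ℤ → ℝ) (he : ∀ k : ℤ, 0 < e k)
    (hmono : ∀ k : ℤ, e (k - 1) / e k ≤ e k / e (k + 1))
    (hlim : Filter.Tendsto (fun k : ℤ => e (k - 1) / e k) Filter.atBot (nhds 0))
    (hratio : ∀ k : ℤ, e (k - 1) / e k ≤ ε / (3 * (L + ε)))
    (S : X → ℤ → ℝ)
    (hS : ∀ x ∈ C, ∀ k : ℤ,
      S x k = sInf {ℓ : ℝ | 0 ≤ ℓ ∧ ∀ z ∈ C, dist z x < e k → |g z - g x| ≤ ℓ * dist x z})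
    (pen : X → ℝ → ℝ)
    (hpen0 : ∀ x ∈ C, pen x 0 = 0)
    (hpennonneg : ∀ x ∈ C, ∀ t : ℝ, 0 ≤ t → 0 ≤ pen x t)
    (hpencont : ∀ x ∈ C, ContinuousOn (pen x) (Set.Ici 0))
    (hpenlin : ∀ x ∈ C, ∀ k : ℤ, ∀ s t : ℝ, e (k - 2) ≤ s → s ≤ t → t ≤ e (k - 1) →
      pen x t - pen x s = (S x k + 3 * L * (e (k - 2) / e (k - 1))) * (t - s))
    :
    ∀ x ∈ C, ∀ y ∈ C, ∀ k : ℤ, e (k - 1) ≤ dist x y → dist x y ≤ e k →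
      g y + e (k - 2) * L ≤ g x + pen x (dist x y) := by
  intro x hx y hy k hd1 hd2
  rcases lt_or_eq_of_le hd2 with hlt | heq
  · exact key_slope C g L ε hL hε hg e he hratio S hS pen hpennonneg hpenlin x hx y hy k hd1 hlt
  · -- dist x y = e k : apply the lemma at k + 1
    have hemono : ∀ j : ℤ, e (j - 1) < e j := by
      intro j
      have h1 := hratio j
      have h2 : ε / (3 * (L + ε)) < 1 := by
        rw [div_lt_one (by positivity)]; linarith
      have := lt_of_le_of_lt h1 h2
      rwa [div_lt_one (he j)] at this
    have hkey := key_slope C g L ε hL hε hg e he hratio S hS pen hpennonneg hpenlin x hx y hy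
      (k + 1) (by rw [show k + 1 - 1 = k by ring]; exact le_of_eq heq.symm)
      (by rw [heq]; have := hemono (k + 1); rwa [show k + 1 - 1 = k by ring] at this)
    rw [show k + 1 - 2 = k - 1 by ring] at hkey
    have hab : e (k - 2) < e (k - 1) := by
      have := hemono (k - 1); rwa [show k - 1 - 1 = k - 2 by ring] at this
    nlinarith
end

section
/- In the slope-extension construction, the function f(y) = inf_{x∈C} φ_x(y) is an (L+ε)-Lipschitz function on X whose restriction to C coincides with g. -/
open Metric

/-- Step 3 of the slope-extension construction: the function
`f(y) = inf_{x ∈ C} (g(x) + pen_x(d(x,y)))` is an `(L+ε)`-Lipschitz function on `X`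
whose restriction to `C` coincides with `g`. -/
theorem f_lipschitz_extension
    {X : Type*} [MetricSpace X] (C : Set X) (hC : C.Nonempty)
    (g : X → ℝ) (L ε : ℝ) (hL : 0 < L) (hε : 0 < ε) (hεL : ε ≤ L)
    (hg : ∀ x ∈ C, ∀ y ∈ C, |g x - g y| ≤ L * dist x y)
    (e : ℤ → ℝ) (he : ∀ k : ℤ, 0 < e k)
    (hmono : ∀ k : ℤ, e (k - 1) / e k ≤ e k / e (k + 1))
    (hlim : Filter.Tendsto (fun k : ℤ => e (k - 1) / e k) Filter.atBot (nhds 0))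
    (hratio : ∀ k : ℤ, e (k - 1) / e k ≤ ε / (3 * (L + ε)))
    (S : X → ℤ → ℝ)
    (hS : ∀ x ∈ C, ∀ k : ℤ,
      S x k = sInf {ℓ : ℝ | 0 ≤ ℓ ∧ ∀ z ∈ C, dist z x < e k → |g z - g x| ≤ ℓ * dist x z})
    (pen : X → ℝ → ℝ)
    (hpen0 : ∀ x ∈ C, pen x 0 = 0)
    (hpennonneg : ∀ x ∈ C, ∀ t : ℝ, 0 ≤ t → 0 ≤ pen x t)
    (hpencont : ∀ x ∈ C, ContinuousOn (pen x) (Set.Ici 0))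
    (hpenlin : ∀ x ∈ C, ∀ k : ℤ, ∀ s t : ℝ, e (k - 2) ≤ s → s ≤ t → t ≤ e (k - 1) →
      pen x t - pen x s = (S x k + 3 * L * (e (k - 2) / e (k - 1))) * (t - s))
    (f : X → ℝ)
    (hf : ∀ y : X, f y = sInf ((fun x => g x + pen x (dist x y)) '' C)) :
    (∀ y z : X, |f y - f z| ≤ (L + ε) * dist y z) ∧ (∀ x ∈ C, f x = g x) := by
  obtain ⟨z0, hz0⟩ := hC
  have hLE : (0:ℝ) < L + ε := by linarith
  -- basic ratio facts
  have hr6 : ∀ k : ℤ, 6 * e (k - 1) ≤ e k := by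
    intro k
    have h2 : ε / (3 * (L + ε)) ≤ 1 / 6 := by
      rw [div_le_div_iff₀ (by linarith) (by norm_num)]
      linarith
    have h3 : e (k - 1) / e k ≤ 1 / 6 := (hratio k).trans h2
    have h4 := (div_le_div_iff₀ (he k) (by norm_num : (0:ℝ) < 6)).mp h3
    linarith
  have emono : ∀ k : ℤ, e (k - 1) < e k := by
    intro k
    have := hr6 k
    have := he (k - 1)
    linarith
  have hgeo : ∀ (n : ℕ) (k : ℤ), 6 ^ n * e k ≤ e (k + n) := by
    intro n
    induction n with
    | zero => intro k; simp
    | succ n ih =>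
      intro k
      have h1 := ih k
      have h2 := hr6 (k + n + 1)
      have h3 : (k + (n:ℤ) + 1) - 1 = k + n := by ring
      rw [h3] at h2
      have h4 : (6:ℝ) ^ (n + 1) * e k = 6 * (6 ^ n * e k) := by ring
      have h5 : (k : ℤ) + ((n:ℕ) + 1 : ℕ) = k + n + 1 := by push_cast; ring
      rw [h5, h4]
      nlinarith [he k]
  have emonole : ∀ j k : ℤ, j ≤ k → e j ≤ e k := by
    have step : ∀ (n : ℕ) (j : ℤ), e j ≤ e (j + n) := by
      intro n j
      have := hgeo n j
      have h1 : (1:ℝ) ≤ 6 ^ n := one_le_pow₀ (by norm_num)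
      nlinarith [he j, mul_le_mul_of_nonneg_right h1 (he j).le]
    intro j k hjk
    have hn : j + ((k - j).toNat : ℤ) = k := by omega
    have := step (k - j).toNat j
    rwa [hn] at this
  have hbig : ∀ t : ℝ, ∃ k : ℤ, t ≤ e k := by
    intro t
    obtain ⟨n, hn⟩ := pow_unbounded_of_one_lt (t / e 0) (by norm_num : (1:ℝ) < 6)
    refine ⟨(n : ℤ), ?_⟩
    have h1 := hgeo n 0
    rw [zero_add] at h1
    have h2 : t < 6 ^ n * e 0 := by
      rw [div_lt_iff₀ (he 0)] at hn; linarith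
    linarith
  have hsmall : ∀ t : ℝ, 0 < t → ∃ k : ℤ, e k < t := by
    intro t ht
    obtain ⟨n, hn⟩ := pow_unbounded_of_one_lt (e 0 / t) (by norm_num : (1:ℝ) < 6)
    refine ⟨-(n : ℤ), ?_⟩
    have h1 := hgeo n (-(n:ℤ))
    have h2 : -(n:ℤ) + (n:ℕ) = 0 := by push_cast; ring
    rw [h2] at h1
    have hp : (0:ℝ) < 6 ^ n := by positivity
    rw [div_lt_iff₀ ht] at hn
    nlinarith [he (-(n:ℤ))]
  have harch : ∀ t : ℝ, 0 < t → ∃ k : ℤ, e (k - 1) ≤ t ∧ t < e k := by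
    intro t ht
    obtain ⟨k0, hk0⟩ := hsmall t ht
    obtain ⟨k1, hk1⟩ := hbig t
    have step : ∀ (n : ℕ) (k : ℤ), e k ≤ t → t < e (k + n) → ∃ j : ℤ, e (j - 1) ≤ t ∧ t < e j := by
      intro n
      induction n with
      | zero => intro k h1 h2; simp at h2; linarith
      | succ n ih =>
        intro k h1 h2
        by_cases hc : t < e (k + 1)
        · exact ⟨k + 1, by simpa using h1, hc⟩
        · push_neg at hc
          have h3 : (k : ℤ) + ((n:ℕ) + 1 : ℕ) = (k + 1) + n := by push_cast; ring
          rw [h3] at h2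
          exact ih (k + 1) hc h2
    have hk01 : k0 < k1 + 1 := by
      by_contra h
      push_neg at h
      have := emonole k1 k0 (by omega)
      linarith
    have hcast : k0 + (((k1 + 1) - k0).toNat : ℤ) = k1 + 1 := by omega
    apply step ((k1 + 1) - k0).toNat k0 hk0.le
    rw [hcast]
    exact lt_of_le_of_lt hk1 (by have := emono (k1 + 1); simpa using this)
  -- facts about S
  have hmemL : ∀ x ∈ C, ∀ k : ℤ,
      L ∈ {ℓ : ℝ | 0 ≤ ℓ ∧ ∀ z ∈ C, dist z x < e k → |g z - g x| ≤ ℓ * dist x z} := by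
    intro x hx k
    refine ⟨hL.le, fun z hz _ => ?_⟩
    rw [dist_comm x z]
    exact hg z hz x hx
  have hbddS : ∀ (x : X) (k : ℤ),
      BddBelow {ℓ : ℝ | 0 ≤ ℓ ∧ ∀ z ∈ C, dist z x < e k → |g z - g x| ≤ ℓ * dist x z} :=
    fun x k => ⟨0, fun ℓ hℓ => hℓ.1⟩
  have hS0 : ∀ x ∈ C, ∀ k : ℤ, 0 ≤ S x k := by
    intro x hx k
    rw [hS x hx k]
    exact le_csInf ⟨L, hmemL x hx k⟩ (fun ℓ hℓ => hℓ.1)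
  have hSL : ∀ x ∈ C, ∀ k : ℤ, S x k ≤ L := by
    intro x hx k
    rw [hS x hx k]
    exact csInf_le (hbddS x k) (hmemL x hx k)
  have hSmono : ∀ x ∈ C, ∀ k : ℤ, S x k ≤ S x (k + 1) := by
    intro x hx k
    rw [hS x hx k, hS x hx (k + 1)]
    refine csInf_le_csInf (hbddS x k) ⟨L, hmemL x hx (k + 1)⟩ ?_
    rintro ℓ ⟨h0, h⟩
    refine ⟨h0, fun z hz hd => h z hz (hd.trans ?_)⟩
    have := emono (k + 1); simpa using this
  have hSval : ∀ x ∈ C, ∀ k : ℤ, ∀ z ∈ C, dist z x < e k → |g z - g x| ≤ S x k * dist x z := by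
    intro x hx k z hz hd
    by_cases h0 : dist x z = 0
    · have hxz : x = z := eq_of_dist_eq_zero h0
      subst hxz
      simp [h0]
    · have h0' : 0 < dist x z := lt_of_le_of_ne dist_nonneg (Ne.symm h0)
      have hlow : |g z - g x| / dist x z ≤ S x k := by
        rw [hS x hx k]
        refine le_csInf ⟨L, hmemL x hx k⟩ ?_
        rintro ℓ ⟨hℓ0, hℓ⟩
        rw [div_le_iff₀ h0']
        exact hℓ z hz hd
      rw [div_le_iff₀ h0'] at hlow
      linarith
  -- slope bounds
  have hslope : ∀ x ∈ C, ∀ k : ℤ,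
      0 ≤ S x k + 3 * L * (e (k - 2) / e (k - 1)) ∧
      S x k + 3 * L * (e (k - 2) / e (k - 1)) ≤ L + ε := by
    intro x hx k
    have hr : e (k - 2) / e (k - 1) ≤ ε / (3 * (L + ε)) := by
      have := hratio (k - 1)
      have h3 : (k : ℤ) - 1 - 1 = k - 2 := by ring
      rwa [h3] at this
    have hrpos : 0 ≤ e (k - 2) / e (k - 1) := le_of_lt (div_pos (he _) (he _))
    have h1 : 3 * L * (e (k - 2) / e (k - 1)) ≤ 3 * L * (ε / (3 * (L + ε))) :=
      mul_le_mul_of_nonneg_left hr (by linarith)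
    have h2 : 3 * L * (ε / (3 * (L + ε))) ≤ ε := by
      rw [← mul_div_assoc, div_le_iff₀ (by linarith : (0:ℝ) < 3 * (L + ε))]
      nlinarith
    constructor
    · have := hS0 x hx k; positivity
    · have := hSL x hx k; linarith
  -- pen is monotone and (L+ε)-Lipschitz on positive reals
  have penIoc : ∀ x ∈ C, ∀ s t : ℝ, 0 < s → s ≤ t →
      0 ≤ pen x t - pen x s ∧ pen x t - pen x s ≤ (L + ε) * (t - s) := by
    intro x hx s t hs hst
    obtain ⟨k0, hk0⟩ := hsmall s hs
    obtain ⟨k1, hk1⟩ := hbig t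
    have main : ∀ (n : ℕ) (k : ℤ), ∀ s t : ℝ, e k ≤ s → s ≤ t → t ≤ e (k + n) →
        0 ≤ pen x t - pen x s ∧ pen x t - pen x s ≤ (L + ε) * (t - s) := by
      intro n
      induction n with
      | zero =>
        intro k s t h1 h2 h3
        simp at h3
        have hst' : s = t := le_antisymm h2 (by linarith)
        subst hst'
        simp
      | succ n ih =>
        intro k s t h1 h2 h3
        have hcast : (k : ℤ) + ((n:ℕ) + 1 : ℕ) = k + n + 1 := by push_cast; ring
        rw [hcast] at h3
        by_cases hc : t ≤ e (k + n)
        · exact ih k s t h1 h2 hc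
        · push_neg at hc
          have hlin := hpenlin x hx (k + n + 2)
          have i2 : (k : ℤ) + n + 2 - 2 = k + n := by ring
          have i1 : (k : ℤ) + n + 2 - 1 = k + n + 1 := by ring
          rw [i1, i2] at hlin
          have hm := hslope x hx (k + n + 2)
          rw [i1, i2] at hm
          by_cases hs2 : e (k + n) ≤ s
          · have heq := hlin s t hs2 h2 h3
            constructor
            · rw [heq]; exact mul_nonneg hm.1 (by linarith)
            · rw [heq]; exact mul_le_mul_of_nonneg_right hm.2 (by linarith)
          · push_neg at hs2
            have hA := ih k s (e (k + n)) h1 hs2.le (le_refl _)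
            have heq := hlin (e (k + n)) t (le_refl _) hc.le h3
            have hB1 : 0 ≤ pen x t - pen x (e (k + n)) := by
              rw [heq]; exact mul_nonneg hm.1 (by linarith)
            have hB2 : pen x t - pen x (e (k + n)) ≤ (L + ε) * (t - e (k + n)) := by
              rw [heq]; exact mul_le_mul_of_nonneg_right hm.2 (by linarith)
            constructor
            · linarith [hA.1]
            · linarith [hA.2]
    have hk01 : k0 < k1 := by
      by_contra h
      push_neg at h
      have := emonole k1 k0 h
      linarith
    have hcast : k0 + (((k1 : ℤ) - k0).toNat : ℤ) = k1 := by omega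
    refine main (k1 - k0).toNat k0 s t hk0.le hst ?_
    rw [hcast]
    exact hk1
  have penlip : ∀ x ∈ C, ∀ s t : ℝ, 0 ≤ s → s ≤ t →
      0 ≤ pen x t - pen x s ∧ pen x t - pen x s ≤ (L + ε) * (t - s) := by
    intro x hx s t hs hst
    rcases eq_or_lt_of_le hs with h0 | h0
    · rw [← h0, hpen0 x hx, sub_zero, sub_zero]
      rcases eq_or_lt_of_le (h0.le.trans hst) with ht0 | ht0
      · rw [← ht0, hpen0 x hx]; norm_num
      · constructor
        · exact hpennonneg x hx t ht0.le
        · -- limit argument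
          have hcont : ContinuousWithinAt (pen x) (Set.Ici 0) 0 :=
            (hpencont x hx) 0 Set.self_mem_Ici
          have h1 : Filter.Tendsto (pen x) (nhdsWithin 0 (Set.Ioi 0)) (nhds 0) := by
            have := hcont.mono (Set.Ioi_subset_Ici le_rfl)
            rw [ContinuousWithinAt, hpen0 x hx] at this
            exact this
          have h2 : Filter.Tendsto (fun s => pen x s + (L + ε) * (t - s))
              (nhdsWithin 0 (Set.Ioi 0)) (nhds ((L + ε) * t)) := by
            have h3 : Filter.Tendsto (fun s : ℝ => (L + ε) * (t - s))
                (nhdsWithin 0 (Set.Ioi 0)) (nhds ((L + ε) * (t - 0))) :=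
              ((continuous_const.mul (continuous_const.sub continuous_id)).tendsto 0).mono_left
                nhdsWithin_le_nhds
            have := h1.add h3
            simpa using this
          refine ge_of_tendsto h2 ?_
          have hmem : Set.Ioo (0:ℝ) t ∈ nhdsWithin (0:ℝ) (Set.Ioi 0) :=
            Ioo_mem_nhdsGT_of_mem ⟨le_refl 0, ht0⟩
          refine Filter.eventually_of_mem hmem (fun s hs' => ?_)
          have := penIoc x hx s t hs'.1 hs'.2.le
          linarith [this.2]
    · exact penIoc x hx s t h0 hst
  -- key inequality : φ_x(z) ≥ g z for x z ∈ C
  have key : ∀ x ∈ C, ∀ z ∈ C, g z ≤ g x + pen x (dist x z) := by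
    intro x hx z hz
    rcases eq_or_lt_of_le (dist_nonneg : (0:ℝ) ≤ dist x z) with h0 | h0
    · have hxz : x = z := eq_of_dist_eq_zero h0.symm
      subst hxz
      rw [dist_self, hpen0 x hx, add_zero]
    · obtain ⟨k, hk1, hk2⟩ := harch (dist x z) h0
      set t := dist x z with ht
      have hval : |g z - g x| ≤ S x k * t := by
        refine hSval x hx k z hz ?_
        rw [dist_comm]; exact hk2
      have hea : e (k - 2) ≤ e (k - 1) := by
        have := emono (k - 1)
        have h3 : (k : ℤ) - 1 - 1 = k - 2 := by ring
        rw [h3] at this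
        linarith
      have hlinA := hpenlin x hx k (e (k - 2)) (e (k - 1)) le_rfl hea le_rfl
      have hlinB := hpenlin x hx (k + 1) (e (k - 1)) t
      have j2 : (k : ℤ) + 1 - 2 = k - 1 := by ring
      have j1 : (k : ℤ) + 1 - 1 = k := by ring
      rw [j1, j2] at hlinB
      have hlinB := hlinB le_rfl hk1 hk2.le
      have hpa : 0 ≤ pen x (e (k - 2)) := hpennonneg x hx _ (he _).le
      set a := e (k - 2) with ha
      set b := e (k - 1) with hb
      set c := e k with hc
      have hapos : 0 < a := he _
      have hbpos : 0 < b := he _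
      have hcpos : 0 < c := he _
      have h6ab : 6 * a ≤ b := by
        have := hr6 (k - 1)
        have h3 : (k : ℤ) - 1 - 1 = k - 2 := by ring
        rwa [h3] at this
      have hab16 : a / b ≤ 1 / 6 := by
        rw [div_le_div_iff₀ hbpos (by norm_num)]; linarith
      set s1 := S x k with hs1
      set s2 := S x (k + 1) with hs2
      have hs10 : 0 ≤ s1 := hS0 x hx k
      have hs1L : s1 ≤ L := hSL x hx k
      have hs12 : s1 ≤ s2 := hSmono x hx k
      -- pen x b ≥ s1 * b
      have h1 : (5/2) * L * a ≤ 3 * L * (a / b) * (b - a) := by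
        have e1 : 3 * L * (a / b) * (b - a) = 3 * L * a * (1 - a / b) := by
          field_simp
        rw [e1]
        have h56 : (5/6 : ℝ) ≤ 1 - a / b := by linarith
        have h57 := mul_le_mul_of_nonneg_left h56 (by positivity : (0:ℝ) ≤ 3 * L * a)
        linarith
      have hpb : s1 * b ≤ pen x b := by
        have h2 : pen x b - pen x a = (s1 + 3 * L * (a / b)) * (b - a) := hlinA
        have h3 : s1 * a ≤ L * a := mul_le_mul_of_nonneg_right hs1L hapos.le
        nlinarith [h1, hpa]
      -- pen x t ≥ s1 * t
      have hpt : s1 * t ≤ pen x t := by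
        have h4 : s1 * (t - b) ≤ (s2 + 3 * L * (b / c)) * (t - b) := by
          refine mul_le_mul_of_nonneg_right ?_ (by linarith)
          have : 0 ≤ 3 * L * (b / c) := by positivity
          linarith
        nlinarith [hlinB, h4, hpb]
      have habs : g z - g x ≤ |g z - g x| := le_abs_self _
      linarith
  -- Lipschitz bound for each φ_x
  have hphiLip : ∀ x ∈ C, ∀ y y' : X,
      g x + pen x (dist x y) ≤ g x + pen x (dist x y') + (L + ε) * dist y y' := by
    intro x hx y y'
    have hnn : 0 ≤ (L + ε) * dist y y' := mul_nonneg hLE.le dist_nonneg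
    rcases le_total (dist x y) (dist x y') with h | h
    · have := penlip x hx (dist x y) (dist x y') dist_nonneg h
      linarith [this.1]
    · have hp := penlip x hx (dist x y') (dist x y) dist_nonneg h
      have htri : dist x y - dist x y' ≤ dist y y' := by
        have := dist_triangle x y' y
        rw [dist_comm y' y] at this
        linarith
      have h2 : (L + ε) * (dist x y - dist x y') ≤ (L + ε) * dist y y' :=
        mul_le_mul_of_nonneg_left htri hLE.le
      linarith [hp.2]
  -- bounded below
  have hlb : ∀ y : X, ∀ x ∈ C, g z0 - (L + ε) * dist z0 y ≤ g x + pen x (dist x y) := by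
    intro y x hx
    have h1 := hphiLip x hx z0 y
    have h2 := key x hx z0 hz0
    linarith
  have hbddb : ∀ y : X, BddBelow ((fun x => g x + pen x (dist x y)) '' C) := by
    intro y
    refine ⟨g z0 - (L + ε) * dist z0 y, ?_⟩
    rintro b ⟨x, hx, rfl⟩
    exact hlb y x hx
  have hne : ∀ y : X, ((fun x => g x + pen x (dist x y)) '' C).Nonempty :=
    fun y => ⟨_, Set.mem_image_of_mem _ hz0⟩
  have hfle : ∀ y : X, ∀ x ∈ C, f y ≤ g x + pen x (dist x y) := by
    intro y x hx
    rw [hf]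
    exact csInf_le (hbddb y) (Set.mem_image_of_mem _ hx)
  have hrestr : ∀ x ∈ C, f x = g x := by
    intro x hx
    refine le_antisymm ?_ ?_
    · have := hfle x x hx
      rw [dist_self, hpen0 x hx, add_zero] at this
      exact this
    · rw [hf]
      refine le_csInf (hne x) ?_
      rintro b ⟨w, hw, rfl⟩
      exact key w hw x hx
  have hmain : ∀ y z : X, f y - f z ≤ (L + ε) * dist y z := by
    intro y z
    have hstep : ∀ x ∈ C, f y - (L + ε) * dist y z ≤ g x + pen x (dist x z) := by
      intro x hx
      have h1 := hfle y x hx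
      have h2 := hphiLip x hx y z
      linarith
    have : f y - (L + ε) * dist y z ≤ f z := by
      rw [hf z]
      refine le_csInf (hne z) ?_
      rintro b ⟨x, hx, rfl⟩
      exact hstep x hx
    linarith
  refine ⟨fun y z => ?_, hrestr⟩
  rw [abs_sub_le_iff]
  refine ⟨hmain y z, ?_⟩
  have := hmain z y
  rwa [dist_comm z y] at this
end

section
/- In the slope-extension construction, for every x̄ ∈ C, every k ∈ ℤ, every y ∈ X with d(y,x̄) < ε_{k−2}, and every x ∈ C with d(x,x̄) ≥ ε_k, one has φ_x(y) ≥ f(y) + ε_{k−1}·L/3. Consequently, for every x̄ ∈ C and k ∈ ℤ, f(y) = inf{ φ_x(y) : x ∈ C, d(x,x̄) < ε_k } for all y ∈ X with d(y,x̄) < ε_{k−2}. -/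
/-!
The ratio bound gives `6 * e k ≤ e (k + 1)`, so the pieces `[e (k-2), e (k-1)]` tile `(0, ∞)`
and `pen x` has slope between `S x k` and `3/2 * L` on the `k`-th piece; in particular
`pen x t ≤ 3/2 * L * t`. If `e (j-1) ≤ dist x xb < e j` (so `j > k`), the loss
`g xb - g x ≤ S x j * dist x xb` is repaid by the slope `≥ S x j` of `pen x` along
`dist x y ≥ dist x xb - dist y xb`, while the extra slope `3 L e (j-2) / e (j-1)` on the piece
`[e (j-2), e (j-1)]` gains at least `2 L e (j-2) ≥ 2 L e (k-1)`. This beats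
`g xb + pen xb (dist xb y) ≤ g xb + 3/2 * L * dist y xb` by `e (k-1) * L / 3`, so points of `C`
outside `ball xb (e k)` are irrelevant for the infimum defining `f y`.
-/

open Metric

open Set Filter Topology

theorem monotoneOn_Ici_of_forall_monotoneOn_Icc {α β : Type*} [LinearOrder α] [Preorder β]
    {e : ℤ → α} (he : Monotone e) (hunb : ∀ t, ∃ k, t ≤ e k) {q : α → β} {a : ℤ}
    (hq : ∀ k, a ≤ k → MonotoneOn q (Icc (e k) (e (k + 1)))) : MonotoneOn q (Ici (e a)) := by
  have hIcc : ∀ b, a ≤ b → MonotoneOn q (Icc (e a) (e b)) := by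
    intro b hab
    induction b, hab using Int.leInduction with
    | base => simp
    | succ b hab ih =>
      rw [← Icc_union_Icc_eq_Icc (he hab) (he (Int.le_add_one le_rfl))]
      exact ih.union_right (hq b hab) (isGreatest_Icc (he hab))
        (isLeast_Icc (he (Int.le_add_one le_rfl)))
  intro s hs t ht hst
  obtain ⟨k, hk⟩ := hunb t
  exact hIcc (max a k) (le_max_left _ _) ⟨hs, hst.trans (hk.trans (he (le_max_right _ _)))⟩
    ⟨ht, hk.trans (he (le_max_right _ _))⟩ hst

theorem BddBelow.image_of_forall_exists_le {α β : Type*} [Preorder β] {F : α → β} {s t : Set α}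
    (hs : BddBelow (F '' s)) (h : ∀ x ∈ t, ∃ x' ∈ s, F x' ≤ F x) : BddBelow (F '' t) := by
  obtain ⟨m, hm⟩ := hs
  refine ⟨m, ?_⟩
  rintro _ ⟨x, hx, rfl⟩
  obtain ⟨x', hx', hle⟩ := h x hx
  exact (hm (mem_image_of_mem F hx')).trans hle

theorem csInf_image_eq_of_forall_exists_le {α β : Type*} [ConditionallyCompleteLattice β]
    {F : α → β} {s t : Set α} (hst : s ⊆ t) (hne : s.Nonempty) (hs : BddBelow (F '' s))
    (h : ∀ x ∈ t, ∃ x' ∈ s, F x' ≤ F x) : sInf (F '' t) = sInf (F '' s) := by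
  refine le_antisymm (csInf_le_csInf (hs.image_of_forall_exists_le h) (hne.image F)
    (image_mono hst)) (le_csInf ((hne.mono hst).image F) ?_)
  rintro _ ⟨x, hx, rfl⟩
  obtain ⟨x', hx', hle⟩ := h x hx
  exact (csInf_le hs (mem_image_of_mem F hx')).trans hle

section Geometric

variable {e : ℤ → ℝ} {c : ℝ}

theorem monotone_of_mul_le_succ (he : ∀ k, 0 < e k) (hc : 1 ≤ c)
    (hgrow : ∀ k, c * e k ≤ e (k + 1)) : Monotone e :=
  monotone_int_of_le_succ fun k => (le_mul_of_one_le_left (he k).le hc).trans (hgrow k)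

theorem pow_mul_le_of_mul_le_succ (hc : 0 ≤ c) (hgrow : ∀ k, c * e k ≤ e (k + 1)) (a : ℤ)
    (n : ℕ) : c ^ n * e a ≤ e (a + n) := by
  simpa using geom_le (u := fun i : ℕ => e (a + i)) hc n fun i _ => by
    simpa [add_assoc] using hgrow (a + i)

theorem exists_le_of_mul_le_succ (he : ∀ k, 0 < e k) (hc : 1 < c)
    (hgrow : ∀ k, c * e k ≤ e (k + 1)) (t : ℝ) : ∃ k, t ≤ e k := by
  obtain ⟨n, hn⟩ := pow_unbounded_of_one_lt (t / e 0) hc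
  refine ⟨n, ?_⟩
  have := pow_mul_le_of_mul_le_succ (zero_le_one.trans hc.le) hgrow 0 n
  rw [div_lt_iff₀ (he 0)] at hn
  rw [zero_add] at this
  linarith

theorem exists_lt_of_mul_le_succ (hc : 1 < c)
    (hgrow : ∀ k, c * e k ≤ e (k + 1)) {δ : ℝ} (hδ : 0 < δ) : ∃ k, e k < δ := by
  obtain ⟨n, hn⟩ := pow_unbounded_of_one_lt (e 0 / δ) hc
  refine ⟨-n, lt_of_mul_lt_mul_left ?_ (pow_pos (zero_lt_one.trans hc) n).le⟩
  have := pow_mul_le_of_mul_le_succ (zero_le_one.trans hc.le) hgrow (-n) n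
  rw [div_lt_iff₀ hδ] at hn
  rw [neg_add_cancel] at this
  linarith

end Geometric

section LocalSlope

variable {X : Type*} [PseudoMetricSpace X] {C : Set X} {g : X → ℝ} {x : X} {L : ℝ}

noncomputable def localSlope (C : Set X) (g : X → ℝ) (x : X) (r : ℝ) : ℝ :=
  sInf {ℓ : ℝ | 0 ≤ ℓ ∧ ∀ z ∈ C, dist z x < r → |g z - g x| ≤ ℓ * dist x z}

theorem localSlope_nonneg (r : ℝ) : 0 ≤ localSlope C g x r :=
  Real.sInf_nonneg fun _ h => h.1

theorem localSlope_le (hL : 0 ≤ L) (hg : ∀ z ∈ C, |g z - g x| ≤ L * dist x z) (r : ℝ) :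
    localSlope C g x r ≤ L :=
  csInf_le ⟨0, fun _ h => h.1⟩ ⟨hL, fun z hz _ => hg z hz⟩

theorem localSlope_mono (hL : 0 ≤ L) (hg : ∀ z ∈ C, |g z - g x| ≤ L * dist x z) :
    Monotone (localSlope C g x) := fun _ _ hr =>
  csInf_le_csInf ⟨0, fun _ h => h.1⟩ ⟨L, hL, fun z hz _ => hg z hz⟩
    fun _ hℓ => ⟨hℓ.1, fun z hz hd => hℓ.2 z hz (hd.trans_le hr)⟩

theorem abs_sub_le_localSlope_mul (hL : 0 ≤ L) (hg : ∀ z ∈ C, |g z - g x| ≤ L * dist x z)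
    {r : ℝ} {z : X} (hz : z ∈ C) (hzr : dist z x < r) :
    |g z - g x| ≤ localSlope C g x r * dist x z := by
  rcases (dist_nonneg (x := x) (y := z)).eq_or_lt with h0 | hpos
  · simpa [← h0] using hg z hz
  exact (div_le_iff₀ hpos).1 <| le_csInf ⟨L, hL, fun z hz _ => hg z hz⟩
    fun ℓ hℓ => (div_le_iff₀ hpos).2 (hℓ.2 z hz hzr)

end LocalSlope

section Piecewise

theorem monotoneOn_sub_mul_of_sub_eq {p : ℝ → ℝ} {a b c m : ℝ}
    (hp : ∀ s t, a ≤ s → s ≤ t → t ≤ b → p t - p s = c * (t - s)) (hm : m ≤ c) :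
    MonotoneOn (fun t => p t - m * t) (Icc a b) := by
  intro s hs t ht hst
  have := hp s t hs.1 hst ht.2
  nlinarith [mul_le_mul_of_nonneg_right hm (sub_nonneg.2 hst)]

theorem monotoneOn_mul_sub_of_sub_eq {p : ℝ → ℝ} {a b c m : ℝ}
    (hp : ∀ s t, a ≤ s → s ≤ t → t ≤ b → p t - p s = c * (t - s)) (hm : c ≤ m) :
    MonotoneOn (fun t => m * t - p t) (Icc a b) := by
  intro s hs t ht hst
  have := hp s t hs.1 hst ht.2
  nlinarith [mul_le_mul_of_nonneg_right hm (sub_nonneg.2 hst)]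

variable {e : ℤ → ℝ} {p : ℝ → ℝ} {c : ℤ → ℝ}

theorem piecewise_sub_eq_on_Icc (hlin : ∀ k s t, e (k - 2) ≤ s → s ≤ t → t ≤ e (k - 1) →
      p t - p s = c k * (t - s)) (k : ℤ) :
    ∀ s t, e k ≤ s → s ≤ t → t ≤ e (k + 1) → p t - p s = c (k + 2) * (t - s) := by
  have := hlin (k + 2)
  rwa [add_sub_cancel_right, show k + 2 - 1 = k + 1 by ring] at this

theorem mul_sub_le_sub_of_piecewise (he : Monotone e) (hunb : ∀ t, ∃ k, t ≤ e k)
    (hlin : ∀ k s t, e (k - 2) ≤ s → s ≤ t → t ≤ e (k - 1) → p t - p s = c k * (t - s))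
    {a : ℤ} {m : ℝ} (hm : ∀ k, a ≤ k → m ≤ c k) {s t : ℝ} (hs : e (a - 2) ≤ s) (hst : s ≤ t) :
    m * (t - s) ≤ p t - p s := by
  have hmono : MonotoneOn (fun t => p t - m * t) (Ici (e (a - 2))) :=
    monotoneOn_Ici_of_forall_monotoneOn_Icc he hunb fun k hk =>
      monotoneOn_sub_mul_of_sub_eq (piecewise_sub_eq_on_Icc hlin k) (hm _ (by omega))
  have := hmono hs (hs.trans hst : e (a - 2) ≤ t) hst
  simp only at this
  linarith

theorem sub_le_mul_sub_of_piecewise (he : Monotone e) (hunb : ∀ t, ∃ k, t ≤ e k)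
    (hlin : ∀ k s t, e (k - 2) ≤ s → s ≤ t → t ≤ e (k - 1) → p t - p s = c k * (t - s))
    {m : ℝ} (hm : ∀ k, c k ≤ m) {a : ℤ} {s t : ℝ} (hs : e a ≤ s) (hst : s ≤ t) :
    p t - p s ≤ m * (t - s) := by
  have hmono : MonotoneOn (fun t => m * t - p t) (Ici (e a)) :=
    monotoneOn_Ici_of_forall_monotoneOn_Icc he hunb fun k _ =>
      monotoneOn_mul_sub_of_sub_eq (piecewise_sub_eq_on_Icc hlin k) (hm _)
  have := hmono hs (hs.trans hst : e a ≤ t) hst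
  simp only at this
  linarith

theorem le_mul_of_sub_le_mul_sub {p : ℝ → ℝ} {m : ℝ} (hcont : ContinuousWithinAt p (Ioi 0) 0)
    (h0 : p 0 = 0) (hinc : ∀ s t, 0 < s → s ≤ t → p t - p s ≤ m * (t - s)) {t : ℝ}
    (ht : 0 ≤ t) : p t ≤ m * t := by
  rcases ht.eq_or_lt with rfl | ht
  · simp [h0]
  have hlim : Tendsto (fun s => p s + m * (t - s)) (𝓝[>] 0) (𝓝 (p 0 + m * (t - 0))) :=
    hcont.add (by fun_prop)
  rw [h0, zero_add, sub_zero] at hlim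
  refine ge_of_tendsto hlim ?_
  filter_upwards [Ioc_mem_nhdsGT ht] with s hs
  linarith [hinc s t hs.1 hs.2]

end Piecewise

theorem exists_lt_and_mem_Ico {e : ℤ → ℝ} (he : Monotone e) (hunb : ∀ t, ∃ k, t ≤ e k)
    {a : ℤ} {D : ℝ} (hD : e a ≤ D) : ∃ j, a < j ∧ D ∈ Ico (e (j - 1)) (e j) := by
  have hbdd : ∀ j, D < e j → a < j := fun j hj => by
    by_contra! h
    exact (hD.trans_lt hj).not_ge (he h)
  obtain ⟨b, hb⟩ := hunb (D + 1)
  obtain ⟨j, hj, hleast⟩ := Int.exists_least_of_bdd ⟨a, fun j hj => (hbdd j hj).le⟩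
    ⟨b, (show D < e b by linarith)⟩
  refine ⟨j, hbdd j hj, ?_, hj⟩
  by_contra! h
  exact (hleast (j - 1) h).not_gt (by omega)

theorem six_mul_le_of_div_le {L ε a b : ℝ} (hL : 0 < L) (hε : 0 < ε) (hεL : ε ≤ L) (hb : 0 < b)
    (h : a / b ≤ ε / (3 * (L + ε))) : 6 * a ≤ b := by
  have : ε / (3 * (L + ε)) ≤ 1 / 6 := by
    rw [div_le_div_iff₀ (by positivity) (by norm_num)]
    linarith
  linarith [(div_le_iff₀ hb).1 (h.trans this)]

section Penalty

variable {X : Type*} [PseudoMetricSpace X] {C : Set X} {g : X → ℝ} {L : ℝ} {e : ℤ → ℝ}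
  {p : ℝ → ℝ} {x : X}

theorem le_mul_of_piecewise (hL : 0 ≤ L) (he : ∀ k, 0 < e k)
    (h6 : ∀ k, 6 * e k ≤ e (k + 1)) (hg : ∀ z ∈ C, |g z - g x| ≤ L * dist x z)
    (hcont : ContinuousWithinAt p (Ioi 0) 0) (hp0 : p 0 = 0)
    (hlin : ∀ k s t, e (k - 2) ≤ s → s ≤ t → t ≤ e (k - 1) →
      p t - p s = (localSlope C g x (e k) + 3 * L * (e (k - 2) / e (k - 1))) * (t - s))
    {t : ℝ} (ht : 0 ≤ t) : p t ≤ 3 / 2 * L * t := by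
  have hslope : ∀ k, localSlope C g x (e k) + 3 * L * (e (k - 2) / e (k - 1)) ≤ 3 / 2 * L := by
    intro k
    have hr : e (k - 2) / e (k - 1) ≤ 1 / 6 := by
      rw [div_le_iff₀ (he _)]
      linarith [(by simpa [sub_add] using h6 (k - 2) : 6 * e (k - 2) ≤ e (k - 1))]
    nlinarith [localSlope_le (r := e k) hL hg]
  refine le_mul_of_sub_le_mul_sub hcont hp0 (fun s t hs hst => ?_) ht
  obtain ⟨a, ha⟩ := exists_lt_of_mul_le_succ (by norm_num) h6 hs
  exact sub_le_mul_sub_of_piecewise (monotone_of_mul_le_succ he (by norm_num) h6)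
    (exists_le_of_mul_le_succ he (by norm_num) h6) hlin hslope ha.le hst

theorem localSlope_mul_add_le_penalty (hL : 0 ≤ L) (he : ∀ k, 0 < e k)
    (h6 : ∀ k, 6 * e k ≤ e (k + 1)) (hg : ∀ z ∈ C, |g z - g x| ≤ L * dist x z)
    (hp_nonneg : ∀ t, 0 ≤ t → 0 ≤ p t)
    (hlin : ∀ k s t, e (k - 2) ≤ s → s ≤ t → t ≤ e (k - 1) →
      p t - p s = (localSlope C g x (e k) + 3 * L * (e (k - 2) / e (k - 1))) * (t - s))
    {j : ℤ} {t : ℝ} (ht : 5 / 6 * e (j - 1) ≤ t) :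
    localSlope C g x (e j) * (t - e (j - 2)) + 2 * L * e (j - 2) ≤ p t := by
  have hmono := monotone_of_mul_le_succ he (by norm_num) h6
  have hj : 6 * e (j - 2) ≤ e (j - 1) := by simpa [sub_add] using h6 (j - 2)
  set σ := localSlope C g x (e j)
  set r := e (j - 2) / e (j - 1)
  set u := min t (e (j - 1))
  have hu : 5 / 6 * e (j - 1) ≤ u := le_min ht (by linarith [he (j - 1)])
  have hu1 : e (j - 2) ≤ u := by linarith [he (j - 2)]
  have hpiece := hlin j (e (j - 2)) u le_rfl hu1 (min_le_right _ _)
  have htail : σ * (t - u) ≤ p t - p u :=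
    mul_sub_le_sub_of_piecewise hmono (exists_le_of_mul_le_succ he (by norm_num) h6) hlin
      (a := j) (fun i hi => le_add_of_le_of_nonneg (localSlope_mono hL hg (hmono hi))
        (by have := div_nonneg (he (i - 2)).le (he (i - 1)).le; positivity))
      hu1 (min_le_left _ _)
  -- `r * e (j-1) = e (j-2)`: the extra slope on `[e (j-2), u]` is worth a multiple of `L e (j-2)`
  have hgain : 2 * L * e (j - 2) ≤ 3 * L * r * (u - e (j - 2)) := by
    have hre : r * e (j - 1) = e (j - 2) := div_mul_cancel₀ _ (he _).ne'
    have : 2 / 3 * e (j - 1) ≤ u - e (j - 2) := by linarith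
    have hr : 0 ≤ 3 * L * r := mul_nonneg (by positivity) (div_nonneg (he _).le (he _).le)
    nlinarith [mul_le_mul_of_nonneg_left this hr]
  linarith [hp_nonneg _ (he (j - 2)).le]

theorem le_add_penalty_of_le_dist (hL : 0 ≤ L) (he : ∀ k, 0 < e k)
    (h6 : ∀ k, 6 * e k ≤ e (k + 1)) (hg : ∀ z ∈ C, |g z - g x| ≤ L * dist x z)
    (hp_nonneg : ∀ t, 0 ≤ t → 0 ≤ p t)
    (hlin : ∀ k s t, e (k - 2) ≤ s → s ≤ t → t ≤ e (k - 1) →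
      p t - p s = (localSlope C g x (e k) + 3 * L * (e (k - 2) / e (k - 1))) * (t - s))
    {xb y : X} {k : ℤ} (hxb : xb ∈ C) (hy : dist y xb < e (k - 2)) (hx : e k ≤ dist x xb) :
    g xb + 3 / 2 * L * dist y xb + e (k - 1) * L / 3 ≤ g x + p (dist x y) := by
  have hmono := monotone_of_mul_le_succ he (by norm_num) h6
  obtain ⟨j, hkj, hDj, hDj'⟩ :=
    exists_lt_and_mem_Ico hmono (exists_le_of_mul_le_succ he (by norm_num) h6) hx
  set σ := localSlope C g x (e j)
  have hσ0 : 0 ≤ σ := localSlope_nonneg _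
  have hσL : σ ≤ L := localSlope_le hL hg _
  have hj : 6 * e (j - 2) ≤ e (j - 1) := by simpa [sub_add] using h6 (j - 2)
  have hk : 6 * e (k - 2) ≤ e (k - 1) := by simpa [sub_add] using h6 (k - 2)
  have hyj : dist y xb < e (j - 2) := hy.trans_le (hmono (by omega))
  have hkj' : e (k - 1) ≤ e (j - 2) := hmono (by omega)
  have hlip : g xb - σ * dist x xb ≤ g x := by
    have := abs_sub_le_localSlope_mul hL hg hxb (by rwa [dist_comm] : dist xb x < e j)
    linarith [(abs_sub_le_iff.1 this).1]
  have htri : dist x xb - dist y xb ≤ dist x y := by linarith [dist_triangle x y xb]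
  have hpen := localSlope_mul_add_le_penalty hL he h6 hg hp_nonneg hlin
    (show 5 / 6 * e (j - 1) ≤ dist x y by linarith)
  linarith [mul_le_mul_of_nonneg_left htri hσ0, mul_le_mul_of_nonneg_right hσL
      (by linarith [dist_nonneg (x := y) (y := xb), he (j - 2)] : 0 ≤ dist y xb + e (j - 2)),
    mul_nonneg hL (he (k - 1)).le, mul_le_mul_of_nonneg_left hkj' hL,
    mul_le_mul_of_nonneg_left hy.le hL, mul_le_mul_of_nonneg_left hk hL]

theorem add_penalty_add_le_of_le_dist {pen : X → ℝ → ℝ} (hL : 0 ≤ L) (he : ∀ k, 0 < e k)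
    (h6 : ∀ k, 6 * e k ≤ e (k + 1)) (hg : ∀ x ∈ C, ∀ z ∈ C, |g z - g x| ≤ L * dist x z)
    (hpen0 : ∀ x ∈ C, pen x 0 = 0) (hpen_nonneg : ∀ x ∈ C, ∀ t, 0 ≤ t → 0 ≤ pen x t)
    (hpencont : ∀ x ∈ C, ContinuousOn (pen x) (Ici 0))
    (hlin : ∀ x ∈ C, ∀ k s t, e (k - 2) ≤ s → s ≤ t → t ≤ e (k - 1) → pen x t - pen x s =
      (localSlope C g x (e k) + 3 * L * (e (k - 2) / e (k - 1))) * (t - s))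
    {xb y : X} {k : ℤ} (hxb : xb ∈ C) (hy : dist y xb < e (k - 2)) (hx : x ∈ C)
    (hfar : e k ≤ dist x xb) :
    g xb + pen xb (dist xb y) + e (k - 1) * L / 3 ≤ g x + pen x (dist x y) := by
  have := le_mul_of_piecewise hL he h6 (hg xb hxb)
    ((hpencont xb hxb 0 self_mem_Ici).mono Ioi_subset_Ici_self) (hpen0 xb hxb) (hlin xb hxb)
    (dist_nonneg (x := y) (y := xb))
  rw [dist_comm xb y]
  linarith [le_add_penalty_of_le_dist hL he h6 (hg x hx) (hpen_nonneg x hx) (hlin x hx)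
    hxb hy hfar]

end Penalty

theorem bddBelow_image_inter_dist_lt {X : Type*} [PseudoMetricSpace X] {C : Set X} {g : X → ℝ}
    {pen : X → ℝ → ℝ} {L r : ℝ} {xb : X} (hL : 0 ≤ L)
    (hg : ∀ x ∈ C, |g x - g xb| ≤ L * dist x xb) (hpen : ∀ x ∈ C, ∀ t, 0 ≤ t → 0 ≤ pen x t)
    (y : X) : BddBelow ((fun x => g x + pen x (dist x y)) '' (C ∩ {x | dist x xb < r})) := by
  refine ⟨g xb - L * r, ?_⟩
  rintro _ ⟨x, ⟨hx, hxr⟩, rfl⟩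
  linarith [(abs_sub_le_iff.1 (hg x hx)).2, hpen x hx _ (dist_nonneg (x := x) (y := y)),
    mul_le_mul_of_nonneg_left hxr.le hL]

theorem f_localization_general
    {X : Type*} [MetricSpace X] (C : Set X)
    (g : X → ℝ) (L ε : ℝ) (hL : 0 < L) (hε : 0 < ε) (hεL : ε ≤ L)
    (hg : ∀ x ∈ C, ∀ y ∈ C, |g x - g y| ≤ L * dist x y)
    (e : ℤ → ℝ) (he : ∀ k : ℤ, 0 < e k)
    (hratio : ∀ k : ℤ, e (k - 1) / e k ≤ ε / (3 * (L + ε)))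
    (S : X → ℤ → ℝ)
    (hS : ∀ x ∈ C, ∀ k : ℤ,
      S x k = sInf {ℓ : ℝ | 0 ≤ ℓ ∧ ∀ z ∈ C, dist z x < e k → |g z - g x| ≤ ℓ * dist x z})
    (pen : X → ℝ → ℝ)
    (hpen0 : ∀ x ∈ C, pen x 0 = 0)
    (hpennonneg : ∀ x ∈ C, ∀ t : ℝ, 0 ≤ t → 0 ≤ pen x t)
    (hpencont : ∀ x ∈ C, ContinuousOn (pen x) (Set.Ici 0))
    (hpenlin : ∀ x ∈ C, ∀ k : ℤ, ∀ s t : ℝ, e (k - 2) ≤ s → s ≤ t → t ≤ e (k - 1) →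
      pen x t - pen x s = (S x k + 3 * L * (e (k - 2) / e (k - 1))) * (t - s))
    (f : X → ℝ)
    (hf : ∀ y : X, f y = sInf ((fun x => g x + pen x (dist x y)) '' C)) :
    (∀ xb ∈ C, ∀ k : ℤ, ∀ y : X, dist y xb < e (k - 2) →
      ∀ x ∈ C, e k ≤ dist x xb →
        f y + e (k - 1) * L / 3 ≤ g x + pen x (dist x y)) ∧
    (∀ xb ∈ C, ∀ k : ℤ, ∀ y : X, dist y xb < e (k - 2) →
      f y = sInf ((fun x => g x + pen x (dist x y)) '' (C ∩ {x : X | dist x xb < e k}))) := by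
  have h6 : ∀ k, 6 * e k ≤ e (k + 1) := fun k =>
    six_mul_le_of_div_le hL hε hεL (he _) (by simpa using hratio (k + 1))
  have hgC : ∀ x ∈ C, ∀ z ∈ C, |g z - g x| ≤ L * dist x z := fun x hx z hz =>
    dist_comm z x ▸ hg z hz x hx
  have hlin : ∀ x ∈ C, ∀ k s t, e (k - 2) ≤ s → s ≤ t → t ≤ e (k - 1) → pen x t - pen x s =
      (localSlope C g x (e k) + 3 * L * (e (k - 2) / e (k - 1))) * (t - s) :=
    fun x hx k s t h1 h2 h3 => by rw [hpenlin x hx k s t h1 h2 h3, hS x hx k]; rfl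
  suffices ∀ xb ∈ C, ∀ k y, dist y xb < e (k - 2) →
      (∀ x ∈ C, e k ≤ dist x xb → f y + e (k - 1) * L / 3 ≤ g x + pen x (dist x y)) ∧
      f y = sInf ((fun x => g x + pen x (dist x y)) '' (C ∩ {x : X | dist x xb < e k})) from
    ⟨fun xb hxb k y hy => (this xb hxb k y hy).1, fun xb hxb k y hy => (this xb hxb k y hy).2⟩
  intro xb hxb k y hy
  have hxb_near : xb ∈ C ∩ {x | dist x xb < e k} := ⟨hxb, by simpa using he k⟩
  have hfar : ∀ x ∈ C, e k ≤ dist x xb →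
      g xb + pen xb (dist xb y) + e (k - 1) * L / 3 ≤ g x + pen x (dist x y) := fun x hx =>
    add_penalty_add_le_of_le_dist hL.le he h6 hgC hpen0 hpennonneg hpencont hlin hxb hy hx
  have hdom : ∀ x ∈ C, ∃ x' ∈ C ∩ {x | dist x xb < e k},
      g x' + pen x' (dist x' y) ≤ g x + pen x (dist x y) := by
    intro x hx
    rcases lt_or_ge (dist x xb) (e k) with hnear | hx'
    · exact ⟨x, ⟨hx, hnear⟩, le_rfl⟩
    · exact ⟨xb, hxb_near, by linarith [hfar x hx hx', mul_pos (he (k - 1)) hL]⟩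
  have hbdd := bddBelow_image_inter_dist_lt (r := e k) hL.le (fun x hx => hg x hx xb hxb)
    hpennonneg y
  have hfy : f y ≤ g xb + pen xb (dist xb y) := (hf y).symm ▸
    csInf_le (hbdd.image_of_forall_exists_le hdom) (mem_image_of_mem _ hxb)
  exact ⟨fun x hx hx' => by linarith [hfar x hx hx'],
    (hf y).trans (csInf_image_eq_of_forall_exists_le inter_subset_left ⟨xb, hxb_near⟩ hbdd hdom)⟩

/-- Step 4 of the slope-extension construction: for `x̄ ∈ C`, `k ∈ ℤ`, `y ∈ B_{ε_{k−2}}(x̄)`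
and `x ∈ C` with `d(x,x̄) ≥ ε_k`, one has `φ_x(y) ≥ f(y) + ε_{k−1}·L/3`; consequently the
infimum defining `f(y)` can be localized to `C ∩ B_{ε_k}(x̄)`. -/
theorem f_localization
    {X : Type*} [MetricSpace X] (C : Set X) (hC : C.Nonempty)
    (g : X → ℝ) (L ε : ℝ) (hL : 0 < L) (hε : 0 < ε) (hεL : ε ≤ L)
    (hg : ∀ x ∈ C, ∀ y ∈ C, |g x - g y| ≤ L * dist x y)
    (e : ℤ → ℝ) (he : ∀ k : ℤ, 0 < e k)
    (hmono : ∀ k : ℤ, e (k - 1) / e k ≤ e k / e (k + 1))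
    (hlim : Filter.Tendsto (fun k : ℤ => e (k - 1) / e k) Filter.atBot (nhds 0))
    (hratio : ∀ k : ℤ, e (k - 1) / e k ≤ ε / (3 * (L + ε)))
    (S : X → ℤ → ℝ)
    (hS : ∀ x ∈ C, ∀ k : ℤ,
      S x k = sInf {ℓ : ℝ | 0 ≤ ℓ ∧ ∀ z ∈ C, dist z x < e k → |g z - g x| ≤ ℓ * dist x z})
    (pen : X → ℝ → ℝ)
    (hpen0 : ∀ x ∈ C, pen x 0 = 0)
    (hpennonneg : ∀ x ∈ C, ∀ t : ℝ, 0 ≤ t → 0 ≤ pen x t)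
    (hpencont : ∀ x ∈ C, ContinuousOn (pen x) (Set.Ici 0))
    (hpenlin : ∀ x ∈ C, ∀ k : ℤ, ∀ s t : ℝ, e (k - 2) ≤ s → s ≤ t → t ≤ e (k - 1) →
      pen x t - pen x s = (S x k + 3 * L * (e (k - 2) / e (k - 1))) * (t - s))
    (f : X → ℝ)
    (hf : ∀ y : X, f y = sInf ((fun x => g x + pen x (dist x y)) '' C)) :
    (∀ xb ∈ C, ∀ k : ℤ, ∀ y : X, dist y xb < e (k - 2) →
      ∀ x ∈ C, e k ≤ dist x xb →
        f y + e (k - 1) * L / 3 ≤ g x + pen x (dist x y)) ∧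
    (∀ xb ∈ C, ∀ k : ℤ, ∀ y : X, dist y xb < e (k - 2) →
      f y = sInf ((fun x => g x + pen x (dist x y)) '' (C ∩ {x : X | dist x xb < e k}))) :=
  f_localization_general C g L ε hL hε hεL hg e he hratio S hS pen hpen0 hpennonneg hpencont hpenlin
    f hf
end

section
/- In the slope-extension construction, let j ∈ ℤ and x̄, z ∈ C satisfy ε_{j−1} ≤ d(x̄,z) < ε_j, and suppose g(x̄) > g(z). Define ψ_{x̄,z} : X → ℝ by ψ_{x̄,z}(y) = g(z) if d(z,y) ≤ ε_{j−2}, and ψ_{x̄,z}(y) = g(z) + [ (g(x̄) − g(z)) / ((1 − ε_{j−2}/d(x̄,z))·d(x̄,z)) ]·(d(y,z) − ε_{j−2}) otherwise. Then φ_z(y) ≥ ψ_{x̄,z}(y) for every y ∈ X. -/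
open Metric

/-- Step 5 of the slope-extension construction: if `j ∈ ℤ`, `x̄, z ∈ C` satisfy
`ε_{j−1} ≤ d(x̄,z) < ε_j` and `g(x̄) > g(z)`, then `φ_z ≥ ψ_{x̄,z}` on `X`, where
`ψ_{x̄,z}(y) = g(z)` if `d(z,y) ≤ ε_{j−2}` and
`ψ_{x̄,z}(y) = g(z) + (g(x̄)−g(z))/((1 − ε_{j−2}/d(x̄,z))·d(x̄,z)) · (d(y,z) − ε_{j−2})`
otherwise. -/
theorem phi_ge_psi
    {X : Type*} [MetricSpace X] (C : Set X) (hC : C.Nonempty)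
    (g : X → ℝ) (L ε : ℝ) (hL : 0 < L) (hε : 0 < ε) (hεL : ε ≤ L)
    (hg : ∀ x ∈ C, ∀ y ∈ C, |g x - g y| ≤ L * dist x y)
    (e : ℤ → ℝ) (he : ∀ k : ℤ, 0 < e k)
    (hmono : ∀ k : ℤ, e (k - 1) / e k ≤ e k / e (k + 1))
    (hlim : Filter.Tendsto (fun k : ℤ => e (k - 1) / e k) Filter.atBot (nhds 0))
    (hratio : ∀ k : ℤ, e (k - 1) / e k ≤ ε / (3 * (L + ε)))
    (S : X → ℤ → ℝ)
    (hS : ∀ x ∈ C, ∀ k : ℤ,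
      S x k = sInf {ℓ : ℝ | 0 ≤ ℓ ∧ ∀ z ∈ C, dist z x < e k → |g z - g x| ≤ ℓ * dist x z})
    (pen : X → ℝ → ℝ)
    (hpen0 : ∀ x ∈ C, pen x 0 = 0)
    (hpennonneg : ∀ x ∈ C, ∀ t : ℝ, 0 ≤ t → 0 ≤ pen x t)
    (hpencont : ∀ x ∈ C, ContinuousOn (pen x) (Set.Ici 0))
    (hpenlin : ∀ x ∈ C, ∀ k : ℤ, ∀ s t : ℝ, e (k - 2) ≤ s → s ≤ t → t ≤ e (k - 1) →
      pen x t - pen x s = (S x k + 3 * L * (e (k - 2) / e (k - 1))) * (t - s))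
    (j : ℤ) (xb z : X) (hxb : xb ∈ C) (hz : z ∈ C)
    (hd1 : e (j - 1) ≤ dist xb z) (hd2 : dist xb z < e j) (hgz : g z < g xb) :
    ∀ y : X,
      (if dist z y ≤ e (j - 2) then g z
        else g z + (g xb - g z) / ((1 - e (j - 2) / dist xb z) * dist xb z)
          * (dist y z - e (j - 2)))
      ≤ g z + pen z (dist z y) := by
  -- basic facts about e
  have hthird : ∀ k : ℤ, 3 * e k ≤ e (k + 1) := by
    intro k
    have h := hratio (k + 1)
    rw [show k + 1 - 1 = k from by ring] at h
    have h2 : ε / (3 * (L + ε)) ≤ 1 / 3 := by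
      rw [div_le_div_iff₀ (by positivity) (by norm_num)]
      nlinarith
    have h3 : e k / e (k + 1) ≤ 1 / 3 := h.trans h2
    have := (div_le_iff₀ (he (k + 1))).mp h3
    linarith
  have hemono : ∀ k k' : ℤ, k ≤ k' → e k ≤ e k' := by
    intro k
    refine Int.le_induction le_rfl ?_
    intro n _ ih
    have := hthird n
    have := he n
    linarith
  have hrmono : ∀ k k' : ℤ, k ≤ k' → e (k - 1) / e k ≤ e (k' - 1) / e k' := by
    intro k
    refine Int.le_induction le_rfl ?_
    intro n _ ih
    have h := hmono n
    rw [show n + 1 - 1 = n from by ring]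
    exact ih.trans h
  set D := dist xb z with hD
  have hDpos : 0 < D := lt_of_lt_of_le (he (j - 1)) hd1
  -- properties of S z k
  have hLmem : ∀ k : ℤ, L ∈ {ℓ : ℝ | 0 ≤ ℓ ∧ ∀ w ∈ C, dist w z < e k →
      |g w - g z| ≤ ℓ * dist z w} := by
    intro k
    refine ⟨hL.le, fun w hw _ => ?_⟩
    have := hg w hw z hz
    rwa [dist_comm z w]
  have hbdd : ∀ k : ℤ, BddBelow {ℓ : ℝ | 0 ≤ ℓ ∧ ∀ w ∈ C, dist w z < e k →
      |g w - g z| ≤ ℓ * dist z w} := by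
    intro k
    exact ⟨0, fun ℓ hℓ => hℓ.1⟩
  have hSnonneg : ∀ k : ℤ, 0 ≤ S z k := by
    intro k
    rw [hS z hz k]
    exact le_csInf ⟨L, hLmem k⟩ fun ℓ hℓ => hℓ.1
  have hSleL : ∀ k : ℤ, S z k ≤ L := by
    intro k
    rw [hS z hz k]
    exact csInf_le (hbdd k) (hLmem k)
  have hSmono : ∀ k k' : ℤ, k ≤ k' → S z k ≤ S z k' := by
    intro k k' hkk'
    rw [hS z hz k, hS z hz k']
    refine csInf_le_csInf (hbdd k) ⟨L, hLmem k'⟩ ?_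
    intro ℓ hℓ
    exact ⟨hℓ.1, fun w hw hwk => hℓ.2 w hw (lt_of_lt_of_le hwk (hemono k k' hkk'))⟩
  -- lower bound on S z j from the point xb
  have hSD : g xb - g z ≤ S z j * D := by
    have hlb : (g xb - g z) / D ≤ S z j := by
      rw [hS z hz j]
      refine le_csInf ⟨L, hLmem j⟩ fun ℓ hℓ => ?_
      have h := hℓ.2 xb hxb hd2
      rw [dist_comm z xb, ← hD] at h
      rw [div_le_iff₀ hDpos]
      calc g xb - g z ≤ |g xb - g z| := le_abs_self _
        _ ≤ ℓ * D := h
    calc g xb - g z = (g xb - g z) / D * D := by field_simp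
      _ ≤ S z j * D := mul_le_mul_of_nonneg_right hlb hDpos.le
  set r := e (j - 2) with hr
  set e1 := e (j - 1) with he1
  have hrpos : 0 < r := he (j - 2)
  have he1pos : 0 < e1 := he (j - 1)
  have hr3 : 3 * r ≤ e1 := by
    have := hthird (j - 2)
    rwa [show j - 2 + 1 = j - 1 from by ring] at this
  have he1D : e1 ≤ D := hd1
  have hDr : 0 < D - r := by linarith
  set m := (g xb - g z) / (D - r) with hm_def
  have hGLD : g xb - g z ≤ L * D := by
    have := hg xb hxb z hz
    exact (le_abs_self _).trans this
  -- slope bound: m is at most pen's slope on every interval of index k ≥ j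
  have hm : ∀ k : ℤ, j ≤ k → m ≤ S z k + 3 * L * (e (k - 2) / e (k - 1)) := by
    intro k hk
    have h1 : m ≤ S z j + 3 * L * (r / e1) := by
      rw [hm_def, div_le_iff₀ hDr]
      have hSr : S z j * r ≤ L * r := mul_le_mul_of_nonneg_right (hSleL j) hrpos.le
      have hre1 : r / e1 * e1 = r := div_mul_cancel₀ _ he1pos.ne'
      have h3Lnn : 0 ≤ 3 * L * (r / e1) := by
        have := div_pos hrpos he1pos
        positivity
      have hb : 2 * L * r ≤ 3 * L * (r / e1) * (D - r) := by
        have h23 : 2 / 3 * e1 ≤ D - r := by linarith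
        calc 2 * L * r = 3 * L * (r / e1) * (2 / 3 * e1) := by
              field_simp
          _ ≤ 3 * L * (r / e1) * (D - r) := mul_le_mul_of_nonneg_left h23 h3Lnn
      nlinarith [hSD, hSr, hb, mul_nonneg hL.le hrpos.le]
    have h2 : S z j ≤ S z k := hSmono j k hk
    have h3 : r / e1 ≤ e (k - 2) / e (k - 1) := by
      have h := hrmono (j - 1) (k - 1) (by omega)
      rwa [show j - 1 - 1 = j - 2 from by ring, show k - 1 - 1 = k - 2 from by ring] at h
    have h4 : 3 * L * (r / e1) ≤ 3 * L * (e (k - 2) / e (k - 1)) :=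
      mul_le_mul_of_nonneg_left h3 (by positivity)
    linarith
  -- main induction: for t in [e (j-2), e (k-1)], pen z t ≥ m * (t - e (j-2))
  have main : ∀ k : ℤ, j ≤ k → ∀ t : ℝ, r ≤ t → t ≤ e (k - 1) →
      m * (t - r) ≤ pen z t := by
    refine Int.le_induction ?_ ?_
    · intro t h1 h2
      have hpl := hpenlin z hz j r t le_rfl h1 h2
      have hp0 : 0 ≤ pen z r := hpennonneg z hz r hrpos.le
      have hmj := hm j le_rfl
      nlinarith [mul_nonneg (sub_nonneg.mpr hmj) (sub_nonneg.mpr h1)]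
    · intro k hk ih t h1 h2
      rw [show k + 1 - 1 = k from by ring] at h2
      rcases le_or_gt t (e (k - 1)) with h | h
      · exact ih t h1 h
      · have hpl := hpenlin z hz (k + 1) (e (k - 1)) t
          (by rw [show k + 1 - 2 = k - 1 from by ring]) h.le
          (by rwa [show k + 1 - 1 = k from by ring])
        rw [show k + 1 - 2 = k - 1 from by ring, show k + 1 - 1 = k from by ring] at hpl
        have hih := ih (e (k - 1)) (by
          have := hemono (j - 2) (k - 1) (by omega)
          rwa [← hr] at this) le_rfl
        have hslope := hm (k + 1) (by omega)
        rw [show k + 1 - 2 = k - 1 from by ring, show k + 1 - 1 = k from by ring] at hslope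
        nlinarith [mul_nonneg (sub_nonneg.mpr hslope) (sub_nonneg.mpr h.le)]
  -- covering: every t is below some e (k - 1) with k ≥ j
  have hgrow : ∀ n : ℕ, (3 : ℝ) ^ n * e j ≤ e (j + n) := by
    intro n
    induction n with
    | zero => simp
    | succ n ih =>
      have h3 := hthird (j + n)
      have : (3 : ℝ) ^ (n + 1) * e j = 3 * ((3 : ℝ) ^ n * e j) := by ring
      rw [show (j + (n + 1 : ℕ) : ℤ) = j + n + 1 from by push_cast; ring, this]
      linarith
  have cover : ∀ t : ℝ, ∃ k : ℤ, j ≤ k ∧ t ≤ e (k - 1) := by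
    intro t
    obtain ⟨n, hn⟩ := pow_unbounded_of_one_lt (t / e j) (by norm_num : (1 : ℝ) < 3)
    refine ⟨j + n + 1, by omega, ?_⟩
    rw [show j + (n : ℤ) + 1 - 1 = j + n from by ring]
    have ht : t < 3 ^ n * e j := by
      rw [div_lt_iff₀ (he j)] at hn
      linarith
    linarith [hgrow n]
  -- conclusion
  intro y
  split_ifs with hy
  · have := hpennonneg z hz (dist z y) dist_nonneg
    linarith
  · push_neg at hy
    have hden : (1 - r / D) * D = D - r := by field_simp
    rw [hden, dist_comm y z]
    obtain ⟨k, hk1, hk2⟩ := cover (dist z y)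
    have := main k hk1 (dist z y) hy.le hk2
    rw [← hm_def] at *
    linarith [main k hk1 (dist z y) hy.le hk2]
end

section
/- In the descending-slope extension construction, for every x ∈ C the function φ_x(y) = g(x) − pen_x(d(x,y)) is (L+ε)-Lipschitz, φ_x(y) ≤ g(y) for all x, y ∈ C, and the function f(y) = sup_{x∈C} φ_x(y) is an (L+ε)-Lipschitz function on X whose restriction to C coincides with g. -/
open Metric

/-- In the descending-slope extension construction: each `φ_x(y) = g(x) − pen_x(d(x,y))`
(`x ∈ C`) is `(L+ε)`-Lipschitz, `φ_x(y) ≤ g(y)` for `x, y ∈ C`, and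
`f(y) = sup_{x ∈ C} φ_x(y)` is an `(L+ε)`-Lipschitz function on `X` whose restriction to
`C` coincides with `g`. -/
theorem descending_f_lipschitz_extension
    {X : Type*} [MetricSpace X] (C : Set X) (hC : C.Nonempty)
    (g : X → ℝ) (L ε : ℝ) (hL : 0 < L) (hε : 0 < ε) (hεL : ε ≤ L)
    (hg : ∀ x ∈ C, ∀ y ∈ C, |g x - g y| ≤ L * dist x y)
    (e : ℤ → ℝ) (he : ∀ k : ℤ, 0 < e k)
    (hmono : ∀ k : ℤ, e (k - 1) / e k ≤ e k / e (k + 1))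
    (hlim : Filter.Tendsto (fun k : ℤ => e (k - 1) / e k) Filter.atBot (nhds 0))
    (hratio : ∀ k : ℤ, e (k - 1) / e k ≤ ε / (3 * (L + ε)))
    (S : X → ℤ → ℝ)
    (hS : ∀ x ∈ C, ∀ k : ℤ,
      S x k = sInf {ℓ : ℝ | 0 ≤ ℓ ∧ ∀ z ∈ C, dist z x < e k → max (g x - g z) 0 ≤ ℓ * dist x z})
    (pen : X → ℝ → ℝ)
    (hpen0 : ∀ x ∈ C, pen x 0 = 0)
    (hpennonneg : ∀ x ∈ C, ∀ t : ℝ, 0 ≤ t → 0 ≤ pen x t)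
    (hpencont : ∀ x ∈ C, ContinuousOn (pen x) (Set.Ici 0))
    (hpenlin : ∀ x ∈ C, ∀ k : ℤ, ∀ s t : ℝ, e (k - 2) ≤ s → s ≤ t → t ≤ e (k - 1) →
      pen x t - pen x s = (S x k + 3 * L * (e (k - 2) / e (k - 1))) * (t - s))
    (f : X → ℝ)
    (hf : ∀ y : X, f y = sSup ((fun x => g x - pen x (dist x y)) '' C)) :
    (∀ x ∈ C, ∀ y z : X,
      |(g x - pen x (dist x y)) - (g x - pen x (dist x z))| ≤ (L + ε) * dist y z) ∧
    (∀ x ∈ C, ∀ y ∈ C, g x - pen x (dist x y) ≤ g y) ∧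
    (∀ y z : X, |f y - f z| ≤ (L + ε) * dist y z) ∧
    (∀ x ∈ C, f x = g x) := by
  have hLε : (0:ℝ) < L + ε := by linarith
  set c : ℝ := ε / (3 * (L + ε)) with hc_def
  have hc0 : 0 < c := by positivity
  have hc1 : c < 1 := by
    rw [div_lt_one (by linarith)]; linarith
  have hc6 : c ≤ 1/6 := by
    rw [div_le_div_iff₀ (by linarith) (by norm_num)]; linarith
  -- ratio bounds
  have hrat : ∀ k : ℤ, e (k - 1) ≤ c * e k := by
    intro k
    have := hratio k
    rw [div_le_iff₀ (he k)] at this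
    linarith [this]
  have hr6 : ∀ k : ℤ, 6 * e (k - 1) ≤ e k := by
    intro k
    have h1 := hrat k
    nlinarith [he k, he (k-1)]
  have hestep : ∀ k : ℤ, e k < e (k + 1) := by
    intro k
    have h := hrat (k + 1)
    simp only [add_sub_cancel_right] at h
    nlinarith [he (k+1)]
  have hemono : StrictMono e := strictMono_int_of_lt_succ hestep
  -- membership of L in the slope sets
  have hmemL : ∀ x ∈ C, ∀ k : ℤ,
      L ∈ {ℓ : ℝ | 0 ≤ ℓ ∧ ∀ z ∈ C, dist z x < e k → max (g x - g z) 0 ≤ ℓ * dist x z} := by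
    intro x hx k
    refine ⟨hL.le, fun z hz _ => ?_⟩
    have := hg x hx z hz
    have h1 : g x - g z ≤ L * dist x z := (abs_le.mp this).2
    have h2 : (0:ℝ) ≤ L * dist x z := mul_nonneg hL.le dist_nonneg
    exact max_le h1 h2
  have hbddb : ∀ x : X, ∀ k : ℤ,
      BddBelow {ℓ : ℝ | 0 ≤ ℓ ∧ ∀ z ∈ C, dist z x < e k → max (g x - g z) 0 ≤ ℓ * dist x z} :=
    fun x k => ⟨0, fun ℓ hℓ => hℓ.1⟩
  have hS0 : ∀ x ∈ C, ∀ k : ℤ, 0 ≤ S x k := by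
    intro x hx k
    rw [hS x hx k]
    exact le_csInf ⟨L, hmemL x hx k⟩ (fun ℓ hℓ => hℓ.1)
  have hSL : ∀ x ∈ C, ∀ k : ℤ, S x k ≤ L := by
    intro x hx k
    rw [hS x hx k]
    exact csInf_le (hbddb x k) (hmemL x hx k)
  have hSsucc : ∀ x ∈ C, ∀ k : ℤ, S x k ≤ S x (k + 1) := by
    intro x hx k
    rw [hS x hx k, hS x hx (k+1)]
    refine csInf_le_csInf (hbddb x k) ⟨L, hmemL x hx (k+1)⟩ ?_
    rintro ℓ ⟨h0, h1⟩
    exact ⟨h0, fun z hz hd => h1 z hz (hd.trans (hemono (by omega)))⟩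
  have hSkey : ∀ x ∈ C, ∀ k : ℤ, ∀ y ∈ C, dist x y < e k →
      g x - g y ≤ S x k * dist x y := by
    intro x hx k y hy hd
    rcases eq_or_lt_of_le (dist_nonneg (x := x) (y := y)) with h0 | h0
    · have hxy : x = y := by rwa [eq_comm, dist_eq_zero] at h0
      subst hxy
      simp
    · have hlb : max (g x - g y) 0 / dist x y ≤ S x k := by
        rw [hS x hx k]
        refine le_csInf ⟨L, hmemL x hx k⟩ ?_
        rintro ℓ ⟨_, h1⟩
        have := h1 y hy (by rwa [dist_comm])
        exact (div_le_iff₀ h0).mpr this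
      have := (div_le_iff₀ h0).mp hlb
      exact le_trans (le_max_left _ _) this
  -- e tends to 0 and ∞
  have he_pow : ∀ n : ℕ, ∀ k : ℤ, e (k - n) ≤ c ^ n * e k := by
    intro n
    induction n with
    | zero => intro k; simp
    | succ n ih =>
      intro k
      have h1 : e (k - (n+1:ℕ)) = e ((k - 1) - n) := by congr 1; push_cast; ring
      have h2 := ih (k - 1)
      have h3 := hrat k
      calc e (k - (n+1:ℕ)) = e ((k-1) - n) := h1
        _ ≤ c ^ n * e (k - 1) := h2
        _ ≤ c ^ n * (c * e k) := by
            exact mul_le_mul_of_nonneg_left h3 (pow_nonneg hc0.le n)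
        _ = c ^ (n+1) * e k := by ring
  have hsmall : ∀ d : ℝ, 0 < d → ∃ m : ℤ, e m ≤ d := by
    intro d hd
    obtain ⟨n, hn⟩ := exists_pow_lt_of_lt_one (div_pos hd (he 0)) hc1
    refine ⟨0 - n, ?_⟩
    have := he_pow n 0
    have : e (0 - (n:ℤ)) ≤ c ^ n * e 0 := this
    have h2 : c ^ n * e 0 < d := by
      rw [lt_div_iff₀ (he 0)] at hn
      linarith
    linarith
  have hbig : ∀ d : ℝ, ∃ m : ℤ, d < e m := by
    intro d
    have hD : (0:ℝ) < max d 0 + 1 := by positivity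
    obtain ⟨n, hn⟩ := exists_pow_lt_of_lt_one (div_pos (he 0) hD) hc1
    refine ⟨n, ?_⟩
    have h1 : e ((n:ℤ) - (n:ℕ)) ≤ c ^ n * e n := he_pow n n
    simp only [sub_self] at h1
    have h2 : c ^ n * (max d 0 + 1) < e 0 := by
      rw [lt_div_iff₀ hD] at hn
      linarith
    have h3 : c ^ n * (max d 0 + 1) < c ^ n * e n := lt_of_lt_of_le h2 h1
    have h4 : max d 0 + 1 < e n := lt_of_mul_lt_mul_left h3 (pow_nonneg hc0.le n)
    have := le_max_left d 0
    linarith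
  have hfloor : ∀ d : ℝ, 0 < d → ∃ m : ℤ, e m ≤ d ∧ d < e (m + 1) := by
    intro d hd
    obtain ⟨a, ha⟩ := hsmall d hd
    obtain ⟨b, hb⟩ := hbig d
    obtain ⟨m, hm1, hm2⟩ := Int.exists_greatest_of_bdd
      (P := fun k => e k ≤ d)
      ⟨b, fun z hz => by
        by_contra hzb
        push_neg at hzb
        have : e b ≤ e z := hemono.monotone (by omega)
        exact absurd (lt_of_lt_of_le hb (this.trans hz)) (lt_irrefl d)⟩
      ⟨a, ha⟩
    refine ⟨m, hm1, ?_⟩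
    by_contra h
    push_neg at h
    have := hm2 (m + 1) h
    omega
  -- slope bounds
  have hslope : ∀ x ∈ C, ∀ k : ℤ,
      0 ≤ S x k + 3 * L * (e (k - 2) / e (k - 1)) ∧
      S x k + 3 * L * (e (k - 2) / e (k - 1)) ≤ L + ε := by
    intro x hx k
    have h1 : (0:ℝ) ≤ 3 * L * (e (k-2) / e (k-1)) :=
      mul_nonneg (by linarith) (div_pos (he _) (he _)).le
    have h2 : e (k - 2) / e (k - 1) ≤ c := by
      have := hratio (k - 1)
      rwa [show k - 1 - 1 = k - 2 from by ring] at this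
    constructor
    · linarith [hS0 x hx k]
    · have h3 : 3 * L * (e (k-2) / e (k-1)) ≤ 3 * L * c :=
        mul_le_mul_of_nonneg_left h2 (by linarith)
      have h4 : 3 * L * c ≤ ε := by
        rw [hc_def, ← mul_div_assoc, div_le_iff₀ (by linarith : (0:ℝ) < 3 * (L + ε))]
        nlinarith
      linarith [hSL x hx k]
  -- pen is monotone and (L+ε)-Lipschitz on [0,∞)
  have penlip : ∀ x ∈ C, ∀ s t : ℝ, 0 ≤ s → s ≤ t →
      pen x s ≤ pen x t ∧ pen x t - pen x s ≤ (L + ε) * (t - s) := by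
    intro x hx
    -- on covered ranges
    have aux : ∀ n : ℕ, ∀ m : ℤ, ∀ s t : ℝ, e m ≤ s → s ≤ t → t ≤ e (m + n) →
        pen x s ≤ pen x t ∧ pen x t - pen x s ≤ (L + ε) * (t - s) := by
      intro n
      induction n with
      | zero =>
        intro m s t h1 h2 h3
        simp only [Nat.cast_zero, add_zero] at h3
        have : s = t := le_antisymm h2 (h3.trans h1)
        subst this
        constructor <;> nlinarith
      | succ n ih =>
        intro m s t h1 h2 h3
        have hcast : m + ((n:ℤ) + 1) = (m + n) + 1 := by ring
        rw [show ((n+1:ℕ):ℤ) = (n:ℤ) + 1 by push_cast; ring, hcast] at h3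
        by_cases hc1' : t ≤ e (m + n)
        · exact ih m s t h1 h2 hc1'
        · push_neg at hc1'
          have hlin : ∀ u v : ℝ, e (m + n) ≤ u → u ≤ v → v ≤ e (m + n + 1) →
              pen x u ≤ pen x v ∧ pen x v - pen x u ≤ (L + ε) * (v - u) := by
            intro u v hu huv hv
            have heq := hpenlin x hx (m + n + 2) u v
              (by rw [show m + n + 2 - 2 = m + n by ring]; exact hu) huv
              (by rw [show m + n + 2 - 1 = m + n + 1 by ring]; exact hv)
            obtain ⟨hs0, hs1⟩ := hslope x hx (m + n + 2)
            rw [show m + n + 2 - 2 = m + n by ring, show m + n + 2 - 1 = m + n + 1 by ring]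
              at hs0 hs1
            rw [show m + n + 2 - 2 = m + n by ring, show m + n + 2 - 1 = m + n + 1 by ring]
              at heq
            constructor
            · nlinarith
            · nlinarith
          by_cases hc2' : e (m + n) ≤ s
          · exact hlin s t hc2' h2 h3
          · push_neg at hc2'
            obtain ⟨ha1, ha2⟩ := ih m s (e (m + n)) h1 hc2'.le le_rfl
            obtain ⟨hb1, hb2⟩ := hlin (e (m + n)) t le_rfl hc1'.le h3
            exact ⟨ha1.trans hb1, by linarith⟩
    have pos_case : ∀ s t : ℝ, 0 < s → s ≤ t →
        pen x s ≤ pen x t ∧ pen x t - pen x s ≤ (L + ε) * (t - s) := by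
      intro s t hs hst
      obtain ⟨a, ha⟩ := hsmall s hs
      obtain ⟨b, hb⟩ := hbig t
      have hab : a ≤ b := by
        by_contra hab
        push_neg at hab
        have : e b ≤ e a := hemono.monotone (by omega)
        linarith
      have hn : a + ((b - a).toNat : ℤ) = b := by omega
      exact aux (b - a).toNat a s t ha hst (by rw [hn]; exact hb.le)
    intro s t hs hst
    rcases eq_or_lt_of_le hs with hs0 | hs0
    · subst hs0
      rcases eq_or_lt_of_le hst with ht0 | ht0
      · subst ht0; constructor <;> simp
      · constructor
        · rw [hpen0 x hx]
          exact hpennonneg x hx t hst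
        · rw [hpen0 x hx, sub_zero, sub_zero]
          refine le_of_forall_pos_le_add ?_
          intro δ hδ
          have hct : ContinuousWithinAt (pen x) (Set.Ici 0) 0 :=
            hpencont x hx 0 Set.self_mem_Ici
          obtain ⟨η, hη, hcl⟩ := Metric.continuousWithinAt_iff.mp hct δ hδ
          obtain ⟨m, hm⟩ := hsmall (min (η/2) t) (by positivity)
          have hm1 : e m ≤ t := hm.trans (min_le_right _ _)
          have hm2 : e m < η := lt_of_le_of_lt (hm.trans (min_le_left _ _)) (by linarith)
          have hpm : pen x (e m) < δ := by
            have := hcl (Set.mem_Ici.mpr (he m).le)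
              (by rw [Real.dist_eq, sub_zero, abs_of_pos (he m)]; exact hm2)
            rw [Real.dist_eq, hpen0 x hx, sub_zero] at this
            exact lt_of_le_of_lt (le_abs_self _) this
          obtain ⟨_, h2⟩ := pos_case (e m) t (he m) hm1
          nlinarith [he m]
    · exact pos_case s t hs0 hst
  -- claim 1
  have claim1 : ∀ x ∈ C, ∀ y z : X,
      |(g x - pen x (dist x y)) - (g x - pen x (dist x z))| ≤ (L + ε) * dist y z := by
    intro x hx y z
    have key : ∀ a b : ℝ, 0 ≤ a → 0 ≤ b → |pen x b - pen x a| ≤ (L + ε) * |b - a| := by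
      intro a b ha hb
      rcases le_total a b with h | h
      · obtain ⟨h1, h2⟩ := penlip x hx a b ha h
        rw [abs_of_nonneg (by linarith), abs_of_nonneg (by linarith)]
        linarith
      · obtain ⟨h1, h2⟩ := penlip x hx b a hb h
        rw [abs_of_nonpos (by linarith), abs_of_nonpos (by linarith)]
        linarith
    have h1 : (g x - pen x (dist x y)) - (g x - pen x (dist x z))
        = pen x (dist x z) - pen x (dist x y) := by ring
    rw [h1]
    have h2 := key (dist x y) (dist x z) dist_nonneg dist_nonneg
    have h3 : |dist x z - dist x y| ≤ dist y z := by
      rw [dist_comm x z, dist_comm x y, dist_comm y z]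
      exact abs_dist_sub_le z y x
    calc |pen x (dist x z) - pen x (dist x y)| ≤ (L + ε) * |dist x z - dist x y| := h2
      _ ≤ (L + ε) * dist y z := mul_le_mul_of_nonneg_left h3 hLε.le
  -- claim 2
  have claim2 : ∀ x ∈ C, ∀ y ∈ C, g x - pen x (dist x y) ≤ g y := by
    intro x hx y hy
    rcases eq_or_lt_of_le (dist_nonneg (x := x) (y := y)) with h0 | h0
    · have hxy : x = y := by rwa [eq_comm, dist_eq_zero] at h0
      subst hxy
      rw [dist_self, hpen0 x hx]
      simp
    · set d := dist x y with hd_def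
      obtain ⟨m, hm1, hm2⟩ := hfloor d h0
      -- pen x (e m) ≥ S x (m+1) * e m
      have hq : S x (m + 1) * e m ≤ pen x (e m) := by
        have heq := hpenlin x hx (m + 1) (e (m - 1)) (e m)
          (by rw [show m + 1 - 2 = m - 1 by ring]) (hemono.monotone (by omega))
          (by rw [show m + 1 - 1 = m by ring])
        rw [show m + 1 - 2 = m - 1 by ring, show m + 1 - 1 = m by ring] at heq
        have hp1 : 0 ≤ pen x (e (m - 1)) := hpennonneg x hx _ (he _).le
        have hr := hr6 m
        have hdiv : e (m - 1) / e m * e m = e (m - 1) := div_mul_cancel₀ _ (he m).ne'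
        have hdr : e (m - 1) / e m ≤ 1/6 := by
          rw [div_le_iff₀ (he m)]; linarith
        have hSle := hSL x hx (m + 1)
        have hS0' := hS0 x hx (m + 1)
        nlinarith [he (m - 1), he m,
          mul_le_mul_of_nonneg_right hdr (he (m-1)).le]
      -- pen x d ≥ S x (m+1) * d
      have hkey : S x (m + 1) * d ≤ pen x d := by
        have heq := hpenlin x hx (m + 2) (e m) d
          (by rw [show m + 2 - 2 = m by ring]) hm1
          (by rw [show m + 2 - 1 = m + 1 by ring]; exact hm2.le)
        rw [show m + 2 - 2 = m by ring, show m + 2 - 1 = m + 1 by ring] at heq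
        have hmon : S x (m + 1) ≤ S x (m + 2) := by
          have := hSsucc x hx (m + 1)
          rwa [show m + 1 + 1 = m + 2 from by ring] at this
        have h3L : (0:ℝ) ≤ 3 * L * (e m / e (m + 1)) :=
          mul_nonneg (by linarith) (div_pos (he _) (he _)).le
        have hstep : S x (m + 1) * (d - e m) ≤ (S x (m + 2) + 3 * L * (e m / e (m + 1))) * (d - e m) :=
          mul_le_mul_of_nonneg_right (by linarith) (by linarith)
        have hid : S x (m + 1) * d = S x (m + 1) * e m + S x (m + 1) * (d - e m) := by ring
        linarith
      have hgxy := hSkey x hx (m + 1) y hy (by rw [← hd_def]; exact hm2)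
      linarith
  -- boundedness of the family
  obtain ⟨c₀, hc₀⟩ := hC
  have hbddA : ∀ y : X, BddAbove ((fun x => g x - pen x (dist x y)) '' C) := by
    intro y
    refine ⟨g c₀ + (L + ε) * dist c₀ y, ?_⟩
    rintro v ⟨w, hw, rfl⟩
    show g w - pen w (dist w y) ≤ g c₀ + (L + ε) * dist c₀ y
    have h1 := claim1 w hw y c₀
    have h2 := claim2 w hw c₀ hc₀
    have h3 : (g w - pen w (dist w y)) - (g w - pen w (dist w c₀)) ≤ (L + ε) * dist y c₀ :=
      (abs_le.mp h1).2
    rw [dist_comm c₀ y]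
    linarith
  have hne : ∀ y : X, ((fun x => g x - pen x (dist x y)) '' C).Nonempty :=
    fun y => ⟨_, ⟨c₀, hc₀, rfl⟩⟩
  -- claim 3
  have claim3 : ∀ y z : X, |f y - f z| ≤ (L + ε) * dist y z := by
    have key : ∀ y z : X, f y ≤ f z + (L + ε) * dist y z := by
      intro y z
      rw [hf y]
      refine csSup_le (hne y) ?_
      rintro v ⟨w, hw, rfl⟩
      show g w - pen w (dist w y) ≤ f z + (L + ε) * dist y z
      have h1 : (g w - pen w (dist w y)) - (g w - pen w (dist w z)) ≤ (L + ε) * dist y z :=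
        (abs_le.mp (claim1 w hw y z)).2
      have h2 : g w - pen w (dist w z) ≤ f z := by
        rw [hf z]
        exact le_csSup (hbddA z) ⟨w, hw, rfl⟩
      linarith
    intro y z
    have h1 := key y z
    have h2 := key z y
    rw [dist_comm z y] at h2
    exact abs_le.mpr ⟨by linarith, by linarith⟩
  -- claim 4
  have claim4 : ∀ x ∈ C, f x = g x := by
    intro x hx
    rw [hf x]
    apply le_antisymm
    · refine csSup_le (hne x) ?_
      rintro v ⟨w, hw, rfl⟩
      exact claim2 w hw x hx
    · refine le_csSup (hbddA x) ⟨x, hx, ?_⟩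
      show g x - pen x (dist x x) = g x
      rw [dist_self, hpen0 x hx, sub_zero]
  exact ⟨claim1, claim2, claim3, claim4⟩
end
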